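/- arXiv:2403.12016 — 7 statements merged into one kernel-verified Lean document; each statement's English description precedes it below -/
import Mathlib

section
/- Let G be an ordered graph on [n] with m > 0 edges, and let S_L(n,m) be the ordered quasi-star graph with n vertices and m edges. Then the number of copies of the ordered left star S_L(k) in G is at most the number of copies of S_L(k) in S_L(n,m). -/
open Finset

-- The right-degree of vertex `i` in an ordered graph on `Fin n`:
-- the number of neighbors `j` with `i < j`.
open scoped Classical in
noncomputable def rdeg {n : ℕ} (G : SimpleGraph (Fin n)) (i : Fin n) : ℕ :=
  (Finset.univ.filter fun j => G.Adj i j ∧ i < j).card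

-- The number of copies of the ordered left star `S_L(k)` in an ordered graph on `Fin n`:
-- sets of `k+1` vertices whose minimum is adjacent to all the others.
open scoped Classical in
noncomputable def leftStarCount {n : ℕ} (G : SimpleGraph (Fin n)) (k : ℕ) : ℕ :=
  ((Finset.univ : Finset (Finset (Fin n))).filter fun s =>
    s.card = k + 1 ∧ ∃ v ∈ s, (∀ w ∈ s, v ≤ w) ∧ ∀ w ∈ s, w ≠ v → G.Adj v w).card

-- The number of edges of an ordered graph on `Fin n`.
open scoped Classical in
noncomputable def ecount {n : ℕ} (G : SimpleGraph (Fin n)) : ℕ :=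
  (Finset.univ.filter fun p : Fin n × Fin n => p.1 < p.2 ∧ G.Adj p.1 p.2).card

-- `f(n,a) = C(a,2) + a(n-a)`, the number of edges of the quasi-star with full part `[a]`.
def quasiStarEdges (n a : ℕ) : ℕ := a.choose 2 + a * (n - a)

-- The ordered quasi-star `S_L(n,m)` (0-indexed): a complete graph on the first `a`
-- vertices joined to everything, plus `b` edges from vertex `a` to the next `b` vertices.
def quasiStar (n a b : ℕ) : SimpleGraph (Fin n) :=
  SimpleGraph.fromRel fun v w =>
    v.val < w.val ∧ (v.val < a ∨ (v.val = a ∧ w.val ≤ a + b))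

/-! Counting the copies of `S_L(k)` by their smallest vertex gives
`leftStarCount G k = ∑ v, (rdeg G v).choose k`, where the right-degrees satisfy
`rdeg G v ≤ n - 1 - v` and sum to `m`. For any convex `f`, the sum `∑ v, f (d v)` over such
degree sequences `d` is largest for the sequence that fills the vertices greedily in order,
`n - 1, n - 2, …, n - a, b, 0, …, 0`: as long as vertex `0` is not full and the other vertices
carry weight, swapping the two values or moving one unit onto vertex `0` does not decrease the
sum, and induction on the number of vertices finishes the argument. The greedy sequence is the
right-degree sequence of `S_L(n,m)`. -/

section Greedy

variable {M : Type*} [AddCommMonoid M]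

/-- `∑ i, f (d i)` for the sequence `d` on `[n]` obtained by placing `m` units on the vertices
`0, 1, …` in turn, each filled up to its capacity `n - 1 - i`. -/
def greedySum (f : ℕ → M) : ℕ → ℕ → M
  | 0, _ => 0
  | n + 1, m => f (min m n) + greedySum f n (m - n)

theorem exists_exchange [PartialOrder M] {f : ℕ → M}
    (hf : ∀ ⦃x y : ℕ⦄, y ≤ x → f (y + 1) + f x ≤ f y + f (x + 1)) {n x y : ℕ}
    (hx : x < n) (hy : 0 < y) (hyn : y ≤ n) :
    ∃ x' y', x' ≤ n ∧ y' < y ∧ x' + y' = x + y ∧ f x + f y ≤ f x' + f y' := by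
  rcases lt_or_ge x y with hxy | hyx
  · exact ⟨y, x, hyn, hxy, add_comm y x, (add_comm _ _).le⟩
  · obtain ⟨y, rfl⟩ := Nat.exists_eq_add_one_of_ne_zero hy.ne'
    refine ⟨x + 1, y, hx, y.lt_add_one, by omega, ?_⟩
    rw [add_comm (f x), add_comm (f (x + 1))]
    exact hf (by omega)

theorem add_sum_le_greedySum_succ [PartialOrder M] [IsOrderedAddMonoid M] {f : ℕ → M}
    (hf : ∀ ⦃x y : ℕ⦄, y ≤ x → f (y + 1) + f x ≤ f y + f (x + 1)) {n : ℕ}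
    (ih : ∀ d : Fin n → ℕ, (∀ i, d i + i < n) → ∑ i, f (d i) ≤ greedySum f n (∑ i, d i))
    {x : ℕ} {d : Fin n → ℕ} (hx : x ≤ n) (hd : ∀ i, d i + i < n) :
    f x + ∑ i, f (d i) ≤ greedySum f (n + 1) (x + ∑ i, d i) := by
  generalize hS : ∑ i, d i = S
  induction S using Nat.strong_induction_on generalizing x d with
  | _ S IH =>
  by_cases hstop : x = n ∨ S = 0
  · have hmin : min (x + S) n = x := by omega
    have hsub : x + S - n = S := by omega
    rw [greedySum, hmin, hsub, ← hS]
    exact add_le_add le_rfl (ih d hd)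
  obtain ⟨hxn, hS0⟩ : x < n ∧ S ≠ 0 := by omega
  obtain ⟨j, -, hj⟩ := exists_ne_zero_of_sum_ne_zero (hS ▸ hS0)
  obtain ⟨x', y', hx', hy', hxy, hle⟩ :=
    exists_exchange hf hxn (Nat.pos_of_ne_zero hj) (by have := hd j; omega)
  set d' := Function.update d j y'
  have hd' : ∀ i, d' i + i < n := by
    intro i
    rcases eq_or_ne i j with rfl | hij
    · have := hd i
      simp only [d', Function.update_self]
      omega
    · simpa [d', hij] using hd i
  have hsum : ∑ i, d' i + d j = S + y' := by
    rw [← hS, sum_update_of_mem (mem_univ j), sdiff_singleton_eq_erase,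
      ← add_sum_erase _ d (mem_univ j)]
    ring
  have hfsum : f x + ∑ i, f (d i) ≤ f x' + ∑ i, f (d' i) := by
    rw [← Function.comp_def f d', Function.comp_update, sum_update_of_mem (mem_univ j),
      sdiff_singleton_eq_erase, ← add_sum_erase _ (fun i => f (d i)) (mem_univ j), ← add_assoc,
      ← add_assoc]
    exact add_le_add hle le_rfl
  calc f x + ∑ i, f (d i) ≤ f x' + ∑ i, f (d' i) := hfsum
    _ ≤ greedySum f (n + 1) (x' + ∑ i, d' i) := IH _ (by omega) hx' hd' rfl
    _ = greedySum f (n + 1) (x + S) := by congr 1; omega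

theorem sum_le_greedySum [PartialOrder M] [IsOrderedAddMonoid M] {f : ℕ → M}
    (hf : ∀ ⦃x y : ℕ⦄, y ≤ x → f (y + 1) + f x ≤ f y + f (x + 1)) :
    ∀ {n : ℕ} (d : Fin n → ℕ), (∀ i, d i + i < n) → ∑ i, f (d i) ≤ greedySum f n (∑ i, d i)
  | 0, _, _ => by simp [greedySum]
  | n + 1, d, hd => by
    rw [Fin.sum_univ_succ, Fin.sum_univ_succ]
    refine add_sum_le_greedySum_succ hf (fun d hd => sum_le_greedySum hf d hd) ?_ fun i => ?_
    · simpa [Nat.lt_succ_iff] using hd 0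
    · have := hd i.succ
      simp only [Fin.val_succ] at this
      omega

end Greedy

theorem Nat.choose_succ_add_choose_le (k : ℕ) ⦃x y : ℕ⦄ (h : y ≤ x) :
    (y + 1).choose k + x.choose k ≤ y.choose k + (x + 1).choose k := by
  cases k with
  | zero => simp
  | succ k =>
    rw [Nat.choose_succ_succ', Nat.choose_succ_succ' x]
    have := Nat.choose_le_choose k h
    omega

theorem rdeg_add_lt {n : ℕ} (G : SimpleGraph (Fin n)) (v : Fin n) : rdeg G v + v < n := by
  classical
  have : rdeg G v ≤ #(Ioi v) := card_le_card fun w hw => by simp_all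
  rw [Fin.card_Ioi] at this
  omega

theorem ecount_eq_sum_rdeg {n : ℕ} (G : SimpleGraph (Fin n)) : ecount G = ∑ v, rdeg G v := by
  classical
  simp only [ecount, rdeg, card_filter, Fintype.sum_prod_type, and_comm]

theorem leftStarCount_eq_sum_choose_rdeg {n : ℕ} (G : SimpleGraph (Fin n)) (k : ℕ) :
    leftStarCount G k = ∑ v, (rdeg G v).choose k := by
  classical
  simp only [rdeg, ← card_powersetCard, ← card_sigma]
  symm
  refine card_bij (fun p _ => insert p.1 p.2) ?_ ?_ ?_
  · rintro ⟨v, t⟩ hp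
    simp only [mem_sigma, mem_univ, mem_powersetCard, true_and, subset_iff, mem_filter] at hp
    obtain ⟨ht, rfl⟩ := hp
    have hvt : v ∉ t := fun h => (ht h).2.false
    simp only [mem_filter, mem_univ, true_and, card_insert_of_notMem hvt]
    refine ⟨v, mem_insert_self v t, ?_, ?_⟩
    · simp only [forall_mem_insert, le_refl, true_and]
      exact fun w hw => (ht hw).2.le
    · simp only [forall_mem_insert, ne_eq, not_true_eq_false, IsEmpty.forall_iff, true_and]
      exact fun w hw _ => (ht hw).1
  · rintro ⟨v, t⟩ hp ⟨v', t'⟩ hp' h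
    simp only [mem_sigma, mem_univ, mem_powersetCard, true_and, subset_iff, mem_filter] at hp hp'
    have least : ∀ {v : Fin n} {t : Finset (Fin n)}, (∀ ⦃w⦄, w ∈ t → G.Adj v w ∧ v < w) →
        IsLeast (↑(insert v t) : Set (Fin n)) v := fun ht =>
      ⟨by simp, fun w hw => by
        rcases mem_insert.1 hw with rfl | hw
        exacts [le_rfl, (ht hw).2.le]⟩
    have hv : v = v' := (least hp.1).unique (h ▸ least hp'.1)
    subst hv
    have ht : t = t' := by
      rw [← erase_insert (fun h => (hp.1 h).2.false), h,
        erase_insert (fun h => (hp'.1 h).2.false)]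
    rw [ht]
  · intro s hs
    simp only [mem_filter, mem_univ, true_and] at hs
    obtain ⟨hcard, v, hv, hmin, hadj⟩ := hs
    refine ⟨⟨v, s.erase v⟩, ?_, insert_erase hv⟩
    simp only [mem_sigma, mem_univ, mem_powersetCard, true_and, card_erase_of_mem hv, hcard]
    refine ⟨fun w hw => ?_, rfl⟩
    obtain ⟨hwv, hws⟩ := mem_erase.1 hw
    simpa using ⟨hadj w hws hwv, lt_of_le_of_ne (hmin w hws) (Ne.symm hwv)⟩

theorem quasiStarEdges_self (n : ℕ) : quasiStarEdges n n = n.choose 2 := by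
  simp [quasiStarEdges]

theorem quasiStarEdges_succ_succ {n a : ℕ} (h : a ≤ n) :
    quasiStarEdges (n + 1) (a + 1) = quasiStarEdges n a + n := by
  obtain ⟨c, rfl⟩ := Nat.exists_eq_add_of_le h
  simp only [quasiStarEdges, Nat.choose_succ_succ, Nat.choose_one_right,
    Nat.add_sub_cancel_left, Nat.add_right_comm a c 1]
  ring

theorem quasiStarEdges_succ_add {n a : ℕ} (h : a < n) :
    quasiStarEdges n (a + 1) + a + 1 = quasiStarEdges n a + n := by
  obtain ⟨c, rfl⟩ := Nat.exists_eq_add_of_lt h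
  simp only [quasiStarEdges, Nat.choose_succ_succ, Nat.choose_one_right]
  rw [show a + c + 1 - (a + 1) = c by omega, show a + c + 1 - a = c + 1 by omega]
  ring

def quasiStarDeg (n a b i : ℕ) : ℕ :=
  if i < a then n - 1 - i else if i = a then b else 0

theorem rdeg_quasiStar {n a b : ℕ} (hb : b = 0 ∨ a + b < n) (v : Fin n) :
    rdeg (quasiStar n a b) v = quasiStarDeg n a b v := by
  classical
  have hv := v.isLt
  rcases lt_trichotomy v.val a with hva | rfl | hav
  · rw [quasiStarDeg, if_pos hva, ← Fin.card_Ioi, rdeg]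
    congr 1
    ext w
    simp only [mem_filter, mem_univ, true_and, mem_Ioi, quasiStar, SimpleGraph.fromRel_adj,
      Fin.lt_def]
    omega
  · rw [quasiStarDeg, if_neg (lt_irrefl _), if_pos rfl, rdeg]
    rcases hb with rfl | hab
    · rw [card_eq_zero, filter_eq_empty_iff]
      simp only [mem_univ, quasiStar, SimpleGraph.fromRel_adj, Fin.lt_def]
      omega
    · calc _ = #(Ioc v ⟨v + b, hab⟩) := by
            congr 1
            ext w
            simp only [mem_filter, mem_univ, true_and, mem_Ioc, quasiStar,
              SimpleGraph.fromRel_adj, Fin.lt_def, Fin.le_def]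
            omega
        _ = b := by simp
  · rw [quasiStarDeg, if_neg (by omega), if_neg (by omega), rdeg, card_eq_zero,
      filter_eq_empty_iff]
    simp only [mem_univ, quasiStar, SimpleGraph.fromRel_adj, Fin.lt_def]
    omega

theorem sum_quasiStarDeg {M : Type*} [AddCommMonoid M] (f : ℕ → M) :
    ∀ {n a b : ℕ}, a ≤ n → (b = 0 ∨ a + b < n) →
    ∑ i : Fin n, f (quasiStarDeg n a b i) = greedySum f n (quasiStarEdges n a + b)
  | 0, a, b, ha, hb => by simp [greedySum]
  | n + 1, 0, b, _, hb => by
    have hbn : b ≤ n := by omega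
    have ih := sum_quasiStarDeg f (n := n) (a := 0) (b := 0) n.zero_le (Or.inl rfl)
    have hshift : ∀ i : Fin n, quasiStarDeg (n + 1) 0 b i.succ = quasiStarDeg n 0 0 i := by
      simp [quasiStarDeg]
    rw [Fin.sum_univ_succ, greedySum]
    simp only [hshift, ih]
    simp [quasiStarDeg, quasiStarEdges, hbn]
  | n + 1, a + 1, b, ha, hb => by
    have ih := sum_quasiStarDeg f (n := n) (a := a) (b := b) (by omega) (by omega)
    have hshift : ∀ i : Fin n, quasiStarDeg (n + 1) (a + 1) b i.succ = quasiStarDeg n a b i := by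
      intro i
      simp only [quasiStarDeg, Fin.val_succ]
      split_ifs <;> omega
    rw [Fin.sum_univ_succ, greedySum, quasiStarEdges_succ_succ (by omega)]
    simp only [hshift, ih]
    simp [quasiStarDeg, add_right_comm _ n b]

theorem leftStarCount_le_quasiStar_general {n m a b k : ℕ} (G : SimpleGraph (Fin n))
    (hmn : m ≤ n.choose 2) (hG : ecount G = m)
    (han : a ≤ n) (ha : quasiStarEdges n a ≤ m)
    (hamax : ∀ a' ≤ n, quasiStarEdges n a' ≤ m → a' ≤ a)
    (hb : b = m - quasiStarEdges n a) :
    leftStarCount G k ≤ leftStarCount (quasiStar n a b) k := by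
  have hab : b = 0 ∨ a + b < n := by
    rcases han.lt_or_eq with hlt | rfl
    · have hnext : m < quasiStarEdges n (a + 1) :=
        lt_of_not_ge fun h => (hamax (a + 1) hlt h).not_gt a.lt_add_one
      have := quasiStarEdges_succ_add hlt
      omega
    · rw [quasiStarEdges_self] at ha hb
      omega
  calc leftStarCount G k
      = ∑ v, (rdeg G v).choose k := leftStarCount_eq_sum_choose_rdeg G k
    _ ≤ greedySum (·.choose k) n (∑ v, rdeg G v) :=
        sum_le_greedySum (f := (·.choose k)) (Nat.choose_succ_add_choose_le k) _ (rdeg_add_lt G)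
    _ = ∑ v : Fin n, (quasiStarDeg n a b v).choose k := by
        rw [← ecount_eq_sum_rdeg, hG, sum_quasiStarDeg (·.choose k) han hab]
        congr 1
        omega
    _ = leftStarCount (quasiStar n a b) k := by
        simp only [leftStarCount_eq_sum_choose_rdeg, rdeg_quasiStar hab]

/-- Among ordered graphs on `[n]` with `m > 0` edges, the quasi-star `S_L(n,m)`
maximizes the number of copies of the ordered left star `S_L(k)`. -/
theorem leftStarCount_le_quasiStar {n m a b k : ℕ} (G : SimpleGraph (Fin n))
    (hm : 0 < m) (hmn : m ≤ n.choose 2) (hG : ecount G = m) (hk : 0 < k)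
    (han : a ≤ n) (ha : quasiStarEdges n a ≤ m)
    (hamax : ∀ a' ≤ n, quasiStarEdges n a' ≤ m → a' ≤ a)
    (hb : b = m - quasiStarEdges n a) :
    leftStarCount G k ≤ leftStarCount (quasiStar n a b) k :=
  leftStarCount_le_quasiStar_general G hmn hG han ha hamax hb
end

section
/- Let G be an ordered graph on [n] and suppose i, i+1 are consecutive vertices with {i, i+1} not an edge of G. Let G_i be the ordered graph obtained by swapping the positions of i and i+1 in the order. Then the number of copies of the ordered left star S_L(k) in G_i equals that in G. -/
open Finset

private lemma swap_key {n : ℕ} (G : SimpleGraph (Fin n)) (i j : Fin n)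
    (hij : (i : ℕ) + 1 = (j : ℕ)) (hnadj : ¬ G.Adj i j) (s : Finset (Fin n))
    (h : ∃ v ∈ s, (∀ w ∈ s, v ≤ w) ∧ ∀ w ∈ s, w ≠ v → (G.comap (Equiv.swap i j)).Adj v w) :
    ∃ v ∈ s.map (Equiv.swap i j).toEmbedding,
      (∀ w ∈ s.map (Equiv.swap i j).toEmbedding, v ≤ w) ∧
      ∀ w ∈ s.map (Equiv.swap i j).toEmbedding, w ≠ v → G.Adj v w := by
  classical
  obtain ⟨v, hv, hmin, hadj⟩ := h
  have hine : i ≠ j := by intro h; rw [h] at hij; omega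
  have hilt : (i : ℕ) < j := by omega
  set σ := Equiv.swap i j with hσ
  have hσi : σ i = j := Equiv.swap_apply_left i j
  have hσj : σ j = i := Equiv.swap_apply_right i j
  have hσo : ∀ w : Fin n, w ≠ i → w ≠ j → σ w = w := fun w h1 h2 =>
    Equiv.swap_apply_of_ne_of_ne h1 h2
  simp only [Finset.mem_map, Equiv.coe_toEmbedding]
  by_cases hvi : v = i
  · rw [hvi] at hv hmin hadj
    have hjs : j ∉ s := by
      intro hjmem
      have := hadj j hjmem (Ne.symm hine)
      exact hnadj (((by simpa [hσi, hσj] using this) : G.Adj j i).symm)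
    have hbig : ∀ w ∈ s, w ≠ i → (j : ℕ) < w := by
      intro w hw hwv
      have h1 : (i : ℕ) ≤ w := hmin w hw
      have h2 : (w : ℕ) ≠ i := fun h => hwv (Fin.ext h)
      have h3 : (w : ℕ) ≠ j := fun h => hjs (by rwa [show w = j from Fin.ext h] at hw)
      omega
    refine ⟨j, ⟨i, hv, hσi⟩, ?_, ?_⟩
    · rintro w ⟨a, ha, rfl⟩
      by_cases hav : a = i
      · rw [hav, hσi]
      · have := hbig a ha hav
        rw [hσo a hav (fun h => hjs (h ▸ ha))]
        exact le_of_lt (Fin.lt_def.2 this)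
    · rintro w ⟨a, ha, rfl⟩ hwj
      have hav : a ≠ i := by intro h; rw [h, hσi] at hwj; exact hwj rfl
      have haj : a ≠ j := fun h => hjs (h ▸ ha)
      rw [hσo a hav haj]
      have := hadj a ha hav
      simpa [hσi, hσo a hav haj] using this
  · by_cases hvj : v = j
    · rw [hvj] at hv hmin hadj
      have his : i ∉ s := by
        intro himem
        have := hmin i himem
        exact absurd (Fin.lt_def.2 hilt) (not_lt.2 this)
      have hbig : ∀ w ∈ s, w ≠ j → (j : ℕ) < w := by
        intro w hw hwv
        have h1 : (j : ℕ) ≤ w := hmin w hw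
        have h2 : (w : ℕ) ≠ j := fun h => hwv (Fin.ext h)
        omega
      refine ⟨i, ⟨j, hv, hσj⟩, ?_, ?_⟩
      · rintro w ⟨a, ha, rfl⟩
        by_cases hav : a = j
        · rw [hav, hσj]
        · have := hbig a ha hav
          rw [hσo a (fun h => his (h ▸ ha)) hav]
          exact le_of_lt (Fin.lt_def.2 (by omega))
      · rintro w ⟨a, ha, rfl⟩ hwi
        have hav : a ≠ j := by intro h; rw [h, hσj] at hwi; exact hwi rfl
        have hai : a ≠ i := fun h => his (h ▸ ha)
        rw [hσo a hai hav]
        have := hadj a ha hav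
        simpa [hσj, hσo a hai hav] using this
    · have hσv : σ v = v := hσo v hvi hvj
      refine ⟨v, ⟨v, hv, hσv⟩, ?_, ?_⟩
      · rintro w ⟨a, ha, rfl⟩
        have h1 : (v : ℕ) ≤ a := hmin a ha
        by_cases hai : a = i
        · rw [hai, hσi]
          have : (v : ℕ) ≤ i := hai ▸ h1
          exact Fin.le_def.2 (by omega)
        · by_cases haj : a = j
          · rw [haj, hσj]
            have h2 : (v : ℕ) ≤ j := haj ▸ h1
            have h3 : (v : ℕ) ≠ j := fun h => hvj (Fin.ext h)
            exact Fin.le_def.2 (by omega)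
          · rw [hσo a hai haj]; exact hmin a ha
      · rintro w ⟨a, ha, rfl⟩ hwv
        have hav : a ≠ v := by intro h; rw [h, hσv] at hwv; exact hwv rfl
        have h2 : G.Adj (σ v) (σ a) := hadj a ha hav
        rwa [hσv] at h2

/-- Swapping two consecutive non-adjacent vertices `i, i+1` in the order leaves the number
of copies of the ordered left star `S_L(k)` unchanged. -/
theorem leftStarCount_swap_nonadjacent {n : ℕ} (G : SimpleGraph (Fin n)) (i j : Fin n)
    (hij : (i : ℕ) + 1 = (j : ℕ)) (hnadj : ¬ G.Adj i j) (k : ℕ) (hk : 0 < k) :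
    leftStarCount (G.comap (Equiv.swap i j)) k = leftStarCount G k := by
  classical
  set σ := Equiv.swap i j with hσ
  have hGG : (G.comap σ).comap σ = G := by
    ext a b
    simp [hσ, Equiv.swap_apply_self]
  have hss : ∀ s : Finset (Fin n), (s.map σ.toEmbedding).map σ.toEmbedding = s := by
    intro s
    ext a
    simp [hσ, Equiv.swap_apply_self, Finset.mem_map, Equiv.coe_toEmbedding]
  have hnadj' : ¬ (G.comap σ).Adj i j := by
    simp only [SimpleGraph.comap_adj, hσ, Equiv.swap_apply_left, Equiv.swap_apply_right]
    exact fun h => hnadj h.symm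
  unfold leftStarCount
  refine Finset.card_bij' (fun s _ => s.map σ.toEmbedding) (fun t _ => t.map σ.toEmbedding)
    ?_ ?_ ?_ ?_
  · intro s hs
    simp only [Finset.mem_filter, Finset.mem_univ, true_and] at hs ⊢
    exact ⟨by rw [Finset.card_map]; exact hs.1, swap_key G i j hij hnadj s hs.2⟩
  · intro t ht
    simp only [Finset.mem_filter, Finset.mem_univ, true_and] at ht ⊢
    refine ⟨by rw [Finset.card_map]; exact ht.1, ?_⟩
    have := swap_key (G.comap σ) i j hij hnadj' t (by rw [hGG]; exact ht.2)
    exact this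
  · intro s _; exact hss s
  · intro t _; exact hss t
end

section
/- For every x ∈ [0,1], the sequence of ordered graphs P(n,x) satisfies: the edge density of P(n,x) tends to x, and the density of the ordered path M (with edges 12 and 23) in P(n,x) tends to -(1/2)·η·(η² - 3) where η = 1 - sqrt(1-x). -/
open Finset

-- The number of copies of the ordered path `M` (edges 12, 23) in an ordered graph:
-- triples `v₁ < v₂ < v₃` with `v₁v₂` and `v₂v₃` edges.
open scoped Classical in
noncomputable def mcount {n : ℕ} (G : SimpleGraph (Fin n)) : ℕ :=
  (Finset.univ.filter fun t : Fin n × Fin n × Fin n =>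
    t.1 < t.2.1 ∧ t.2.1 < t.2.2 ∧ G.Adj t.1 t.2.1 ∧ G.Adj t.2.1 t.2.2).card

-- Size of the middle part `B` of `P(n,x)`.
noncomputable def pB (n : ℕ) (x : ℝ) : ℕ := ⌊(n : ℝ) * (1 - Real.sqrt (1 - x))⌋₊

-- Size of the first part `A` of `P(n,x)` (so that `||A| - |C|| ≤ 1`).
noncomputable def pA (n : ℕ) (x : ℝ) : ℕ := (n - pB n x) / 2

-- The ordered graph `P(n,x)` on `[n] = A ⊔ B ⊔ C` with all edges incident to `B`
-- (i.e. edge sets `A×B`, pairs within `B`, and `B×C`) and no other edges.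
noncomputable def Pgraph (n : ℕ) (x : ℝ) : SimpleGraph (Fin n) :=
  SimpleGraph.fromRel fun v w =>
    (pA n x ≤ v.val ∧ v.val < pA n x + pB n x) ∨
    (pA n x ≤ w.val ∧ w.val < pA n x + pB n x)

/-!
`P(n,x)` is the complete split graph whose clique is the interval `B` of length `⌊ηn⌋` in the
middle of `[n]`. Its non-edges are exactly the pairs outside `B`, so it has
`C(n,2) - C(n - |B|, 2)` edges, giving edge density `1 - (1 - η)² = x`. Since `B` is an
interval, a triple `u < v < w` spans a copy of `M` iff its middle vertex `v` lies in `B`, so `M`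
has `∑_{v ∈ B} v (n - 1 - v)` copies: a Riemann sum for `n³ ∫ t (1 - t) dt` over
`[(1 - η)/2, (1 + η)/2]`, which yields the density `(3η - η³)/2`.
-/

open Filter Topology

def completeSplitGraph {V : Type*} (s : Finset V) : SimpleGraph V :=
  SimpleGraph.fromRel fun v w => v ∈ s ∨ w ∈ s

lemma completeSplitGraph_adj {V : Type*} (s : Finset V) (v w : V) :
    (completeSplitGraph s).Adj v w ↔ v ≠ w ∧ (v ∈ s ∨ w ∈ s) := by
  rw [completeSplitGraph, SimpleGraph.fromRel_adj]
  tauto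

section Counting

open scoped Classical

variable {n : ℕ} (s : Finset (Fin n))

lemma ecount_completeSplitGraph_add_choose :
    ecount (completeSplitGraph s) + (n - #s).choose 2 = n.choose 2 := by
  have hnon : ({x | x.1 < x.2 ∧ ¬(completeSplitGraph s).Adj x.1 x.2} : Finset (Fin n × Fin n)) =
      {x ∈ sᶜ ×ˢ sᶜ | x.1 < x.2} := by
    ext x
    simp only [completeSplitGraph_adj, mem_filter, mem_univ, mem_product, mem_compl, true_and]
    constructor
    · rintro ⟨hlt, hadj⟩
      exact ⟨⟨fun h => hadj ⟨hlt.ne, .inl h⟩, fun h => hadj ⟨hlt.ne, .inr h⟩⟩, hlt⟩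
    · rintro ⟨⟨h1, h2⟩, hlt⟩
      exact ⟨hlt, by tauto⟩
  have htot := Fintype.card_product_filter_lt (α := Fin n)
  have hcompl := card_product_filter_lt (s := sᶜ)
  rw [Fintype.card_fin] at htot
  rw [card_compl, Fintype.card_fin] at hcompl
  rw [ecount, ← htot, ← hcompl, ← hnon, ← filter_filter, ← filter_filter,
    card_filter_add_card_filter_not]

lemma mcount_completeSplitGraph (hs : (s : Set (Fin n)).OrdConnected) :
    mcount (completeSplitGraph s) = ∑ v ∈ s, v * (n - 1 - v) := by
  have hmid : ({t | t.1 < t.2.1 ∧ t.2.1 < t.2.2 ∧ (completeSplitGraph s).Adj t.1 t.2.1 ∧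
      (completeSplitGraph s).Adj t.2.1 t.2.2} : Finset (Fin n × Fin n × Fin n)) =
      ({t | t.1 < t.2.1 ∧ t.2.1 < t.2.2 ∧ t.2.1 ∈ s} : Finset (Fin n × Fin n × Fin n)) := by
    ext ⟨i, j, k⟩
    simp only [completeSplitGraph_adj, mem_filter, mem_univ, true_and]
    constructor
    · rintro ⟨hij, hjk, ⟨-, hi | hj⟩, ⟨-, hj | hk⟩⟩
      all_goals first
        | exact ⟨hij, hjk, hj⟩
        | exact ⟨hij, hjk, hs.out hi hk ⟨hij.le, hjk.le⟩⟩
    · rintro ⟨hij, hjk, hj⟩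
      exact ⟨hij, hjk, ⟨hij.ne, .inr hj⟩, ⟨hjk.ne, .inl hj⟩⟩
  rw [mcount, hmid]
  calc _ = #(s.sigma fun j => Iio j ×ˢ Ioi j) := by
        refine card_nbij' (fun t => ⟨t.2.1, (t.1, t.2.2)⟩) (fun p => (p.2.1, p.1, p.2.2))
          ?_ ?_ ?_ ?_
        all_goals intro; simp +contextual
    _ = ∑ v ∈ s, v * (n - 1 - v) := by
        simp only [card_sigma, card_product, Fin.card_Iio, Fin.card_Ioi]

end Counting

section Pgraph

variable (n : ℕ) (x : ℝ)

noncomputable def pBset : Finset (Fin n) := {v | pA n x ≤ v.val ∧ v.val < pA n x + pB n x}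

lemma pB_le : pB n x ≤ n :=
  Nat.floor_le_of_le <|
    mul_le_of_le_one_right n.cast_nonneg (by linarith [Real.sqrt_nonneg (1 - x)])

lemma pA_add_pB_le : pA n x + pB n x ≤ n := by
  have := pB_le n x
  unfold pA
  omega

lemma map_valEmbedding_pBset :
    (pBset n x).map Fin.valEmbedding = Ico (pA n x) (pA n x + pB n x) := by
  ext l
  simp only [pBset, Finset.mem_map, mem_filter, mem_univ, true_and, Fin.valEmbedding_apply,
    mem_Ico]
  constructor
  · rintro ⟨v, hv, rfl⟩
    exact hv
  · intro hl
    exact ⟨⟨l, by linarith [pA_add_pB_le n x, hl.2]⟩, hl, rfl⟩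

lemma card_pBset : #(pBset n x) = pB n x := by
  rw [← card_map Fin.valEmbedding, map_valEmbedding_pBset, Nat.card_Ico, Nat.add_sub_cancel_left]

lemma ordConnected_pBset : (pBset n x : Set (Fin n)).OrdConnected :=
  ⟨fun i hi k hk j hj => by
    simp only [pBset, coe_filter, mem_univ, true_and, Set.mem_ofPred_eq] at hi hk ⊢
    have := hj.1
    have := hj.2
    omega⟩

lemma Pgraph_eq_completeSplitGraph : Pgraph n x = completeSplitGraph (pBset n x) := by
  ext v w
  simp [Pgraph, completeSplitGraph, pBset]

lemma ecount_Pgraph_add_choose : ecount (Pgraph n x) + (n - pB n x).choose 2 = n.choose 2 := by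
  rw [Pgraph_eq_completeSplitGraph, ← card_pBset, ecount_completeSplitGraph_add_choose]

lemma cast_mcount_Pgraph : (mcount (Pgraph n x) : ℝ) =
    ∑ l ∈ range (pA n x + pB n x), (l : ℝ) * (n - 1 - l) -
      ∑ l ∈ range (pA n x), (l : ℝ) * (n - 1 - l) := by
  rw [Pgraph_eq_completeSplitGraph, mcount_completeSplitGraph _ (ordConnected_pBset n x),
    ← sum_Ico_eq_sub _ (Nat.le_add_right _ _), ← map_valEmbedding_pBset, sum_map, Nat.cast_sum]
  refine sum_congr rfl fun v _ => ?_
  have := v.isLt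
  rw [Nat.cast_mul, Nat.cast_sub (by omega), Nat.cast_sub (by omega)]
  simp

end Pgraph

lemma tendsto_natFloor_div {y : ℕ → ℝ} {t : ℝ} (hy : ∀ n, 0 ≤ y n)
    (h : Tendsto (fun n => y n / n) atTop (𝓝 t)) :
    Tendsto (fun n => (⌊y n⌋₊ : ℝ) / n) atTop (𝓝 t) := by
  refine tendsto_of_tendsto_of_tendsto_of_le_of_le
    (by simpa only [sub_zero] using h.sub tendsto_one_div_atTop_nhds_zero_nat) h
    (fun n => ?_) (fun n => ?_)
  · rw [← sub_div]
    gcongr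
    linarith [Nat.lt_floor_add_one (y n)]
  · gcongr
    exact Nat.floor_le (hy n)

lemma tendsto_choose_div_pow (k : ℕ) :
    Tendsto (fun n : ℕ => (n.choose k : ℝ) / n ^ k) atTop (𝓝 (1 / k.factorial)) := by
  refine ((isEquivalent_choose k).div
    (Asymptotics.IsEquivalent.refl (u := fun n : ℕ => (n : ℝ) ^ k))).symm.tendsto_nhds ?_
  refine tendsto_const_nhds.congr' ((eventually_ne_atTop 0).mono fun n hn => ?_)
  simp only [Pi.div_apply]
  field_simp

lemma tendsto_choose_two_div_sq {m : ℕ → ℕ} {t : ℝ}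
    (h : Tendsto (fun n => (m n : ℝ) / n) atTop (𝓝 t)) :
    Tendsto (fun n => ((m n).choose 2 : ℝ) / n ^ 2) atTop (𝓝 (t ^ 2 / 2)) := by
  have key := (h.mul (h.sub tendsto_one_div_atTop_nhds_zero_nat)).div_const 2
  rw [sub_zero, ← sq] at key
  refine key.congr' ((eventually_ne_atTop 0).mono fun n hn => ?_)
  dsimp only
  rw [Nat.cast_choose_two]
  field_simp

lemma sum_range_mul_sub (c : ℝ) (m : ℕ) :
    ∑ l ∈ range m, (l : ℝ) * (c - l) = c * m * (m - 1) / 2 - (m - 1) * m * (2 * m - 1) / 6 := by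
  induction m with
  | zero => simp
  | succ m ih => rw [sum_range_succ, ih]; push_cast; ring

lemma tendsto_sum_range_mul_sub_div_cube {m : ℕ → ℕ} {t : ℝ}
    (h : Tendsto (fun n => (m n : ℝ) / n) atTop (𝓝 t)) :
    Tendsto (fun n : ℕ => (∑ l ∈ range (m n), (l : ℝ) * (n - 1 - l)) / n ^ 3) atTop
      (𝓝 (t ^ 2 / 2 - t ^ 3 / 3)) := by
  have he := tendsto_one_div_atTop_nhds_zero_nat (𝕜 := ℝ)
  have key := ((((tendsto_const_nhds (x := 1)).sub he).mul h).mul (h.sub he)).div_const 2 |>.sub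
    ((((h.sub he).mul h).mul ((h.const_mul 2).sub he)).div_const 6)
  convert key.congr' ((eventually_ne_atTop 0).mono fun n hn => ?_) using 2
  · ring
  · rw [sum_range_mul_sub]
    field_simp

lemma tendsto_pB_div {x : ℝ} (hx : 0 ≤ x) :
    Tendsto (fun n => (pB n x : ℝ) / n) atTop (𝓝 (1 - √(1 - x))) := by
  have hη : 0 ≤ 1 - √(1 - x) := sub_nonneg.2 (Real.sqrt_le_one.2 (by linarith))
  refine tendsto_natFloor_div (fun n => by positivity) (tendsto_const_nhds.congr' ?_)
  filter_upwards [eventually_ne_atTop 0] with n hn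
  field_simp

lemma tendsto_sub_pB_div {x : ℝ} (hx : 0 ≤ x) :
    Tendsto (fun n => ((n - pB n x : ℕ) : ℝ) / n) atTop (𝓝 (√(1 - x))) := by
  have hlim := (tendsto_const_nhds (x := (1 : ℝ))).sub (tendsto_pB_div hx)
  rw [sub_sub_cancel] at hlim
  refine hlim.congr' ?_
  filter_upwards [eventually_ne_atTop 0] with n hn
  rw [Nat.cast_sub (pB_le n x)]
  field_simp

lemma tendsto_pA_div {x : ℝ} (hx : 0 ≤ x) :
    Tendsto (fun n => (pA n x : ℝ) / n) atTop (𝓝 (√(1 - x) / 2)) := by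
  have hpA : ∀ n, pA n x = ⌊((n - pB n x : ℕ) : ℝ) / 2⌋₊ := fun n => by
    rw [Nat.floor_div_ofNat, Nat.floor_natCast, pA]
  simp only [hpA]
  refine tendsto_natFloor_div (fun n => by positivity) ?_
  simpa only [div_right_comm] using (tendsto_sub_pB_div hx).div_const 2

theorem tendsto_ecount_Pgraph_div_choose_two {x : ℝ} (hx : x ∈ Set.Icc (0 : ℝ) 1) :
    Tendsto (fun n : ℕ => (ecount (Pgraph n x) : ℝ) / n.choose 2) atTop (𝓝 x) := by
  have hall := tendsto_choose_div_pow 2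
  have hlim := (hall.sub (tendsto_choose_two_div_sq (tendsto_sub_pB_div hx.1))).div hall
    (by norm_num)
  rw [Real.sq_sqrt (by linarith [hx.2])] at hlim
  convert hlim.congr' ?_ using 2
  · field_simp
    ring
  filter_upwards [eventually_ge_atTop 2] with n hn
  have hchoose : (n.choose 2 : ℝ) ≠ 0 := by exact_mod_cast (Nat.choose_pos hn).ne'
  have hecount : (ecount (Pgraph n x) : ℝ) = n.choose 2 - (n - pB n x).choose 2 := by
    rw [← ecount_Pgraph_add_choose n x, Nat.cast_add, add_sub_cancel_right]
  rw [Pi.div_apply, hecount]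
  field_simp

theorem tendsto_mcount_Pgraph_div_choose_three {x : ℝ} (hx : 0 ≤ x) :
    Tendsto (fun n : ℕ => (mcount (Pgraph n x) : ℝ) / n.choose 3) atTop
      (𝓝 (-(1/2) * (1 - √(1 - x)) * ((1 - √(1 - x)) ^ 2 - 3))) := by
  have hA := tendsto_pA_div hx
  have hAB : Tendsto (fun n => ((pA n x + pB n x : ℕ) : ℝ) / n) atTop
      (𝓝 (√(1 - x) / 2 + (1 - √(1 - x)))) := by
    simpa only [Nat.cast_add, add_div] using hA.add (tendsto_pB_div hx)
  have hlim := ((tendsto_sum_range_mul_sub_div_cube hAB).sub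
    (tendsto_sum_range_mul_sub_div_cube hA)).div (tendsto_choose_div_pow 3) (by norm_num)
  convert hlim.congr' ?_ using 2
  · norm_num [Nat.factorial]
    ring
  filter_upwards [eventually_ge_atTop 3] with n hn
  have hchoose : (n.choose 3 : ℝ) ≠ 0 := by exact_mod_cast (Nat.choose_pos hn).ne'
  rw [Pi.div_apply, cast_mcount_Pgraph, ← sub_div]
  field_simp

/-- The edge density of `P(n,x)` tends to `x` and the density of the ordered path `M`
in `P(n,x)` tends to `-(1/2)·η·(η² - 3)` with `η = 1 - √(1-x)`. -/
theorem Pgraph_densities (x : ℝ) (hx : x ∈ Set.Icc (0:ℝ) 1) :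
    Filter.Tendsto (fun n : ℕ => (ecount (Pgraph n x) : ℝ) / (n.choose 2 : ℝ))
      Filter.atTop (nhds x) ∧
    Filter.Tendsto (fun n : ℕ => (mcount (Pgraph n x) : ℝ) / (n.choose 3 : ℝ))
      Filter.atTop
      (nhds (-(1/2) * (1 - Real.sqrt (1 - x)) * ((1 - Real.sqrt (1 - x))^2 - 3))) :=
  ⟨tendsto_ecount_Pgraph_div_choose_two hx, tendsto_mcount_Pgraph_div_choose_three hx.1⟩
end

section
/- For every x ∈ [0,1], the sequence of ordered graphs Q(n,x) satisfies: the edge density tends to x, and the density of the ordered path M in Q(n,x) tends to 6η³ + 6(1-2η)η² if η ≤ 1/2, and to 2η³ - 6η² + 6η - 1 if η ≥ 1/2, where η = 1 - sqrt(1-x). -/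
open Finset

-- The ordered graph `Q(n,x)` on `[n]` with edges `ij` whenever `j - i ≤ ⌊(1-√(1-x))·n⌋`.
noncomputable def Qgraph (n : ℕ) (x : ℝ) : SimpleGraph (Fin n) :=
  SimpleGraph.fromRel fun v w =>
    v.val < w.val ∧ w.val - v.val ≤ ⌊(1 - Real.sqrt (1 - x)) * (n : ℝ)⌋₊

/-! With `m = ⌊η n⌋`, two vertices `i < j` of `Q(n,x)` are adjacent iff `j - i ≤ m`. The pairs
`i < j` with `j - i > m` are, after shifting `j` down by `m`, the increasing pairs of `[n - m]`, so
`Q(n,x)` has `C(n,2) - C(n-m,2)` edges. For a triple `i < j < k` the same shift applies to each of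
the gaps `j - i` and `k - j` that exceeds `m`, and inclusion–exclusion counts
`C(n,3) - 2 C(n-m,3) + C(n-2m,3)` copies of `M`, where `n - 2m` is truncated at `0`. Since
`C(a_n,k) / C(n,k) → c^k` whenever `a_n / n → c`, the densities tend to `1 - (1-η)^2 = x` and to
`1 - 2(1-η)^3 + max(1-2η, 0)^3`, which is the stated polynomial on either side of `η = 1/2`. -/

open Filter Topology
open scoped Nat

theorem sum_range_choose_two (N : ℕ) : ∑ k ∈ range N, k.choose 2 = N.choose 3 := by
  induction N with
  | zero => rfl
  | succ N ih => rw [sum_range_succ, ih, Nat.choose_succ_succ' N 2, add_comm]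

theorem card_filter_lt_lt (N : ℕ) :
    #{t : Fin N × Fin N × Fin N | t.1 < t.2.1 ∧ t.2.1 < t.2.2} = N.choose 3 := by
  rw [card_eq_sum_card_fiberwise (f := fun t => t.2.2) (t := univ) (by simp)]
  have hfiber (k : Fin N) :
      #{t ∈ ({t : Fin N × Fin N × Fin N | t.1 < t.2.1 ∧ t.2.1 < t.2.2} : Finset _) | t.2.2 = k}
        = #{x ∈ Iio k ×ˢ Iio k | x.1 < x.2} :=
    card_nbij' (fun t => (t.1, t.2.1)) (fun x => (x.1, x.2, k)) (fun t ht => by grind)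
      (fun x hx => by grind) (fun t ht => by grind) (fun _ _ => rfl)
  simp_rw [hfiber, card_product_filter_lt, Fin.card_Iio]
  rw [Fin.sum_univ_eq_sum_range (fun k => k.choose 2), sum_range_choose_two]

def gappedPairs (n a : ℕ) : Finset (Fin n × Fin n) := {p | p.1.val + a < p.2}

def gappedTriples (n a b : ℕ) : Finset (Fin n × Fin n × Fin n) :=
  {t | t.1.val + a < t.2.1 ∧ t.2.1.val + b < t.2.2}

theorem card_gappedPairs (n a : ℕ) : #(gappedPairs n a) = (n - a).choose 2 := by
  rw [← Fintype.card_fin (n - a), ← Fintype.card_product_filter_lt]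
  symm
  refine card_bij' (fun p _ => (⟨p.1, by omega⟩, ⟨p.2 + a, by omega⟩))
    (fun p hp => (⟨p.1, by simp only [gappedPairs, mem_filter] at hp; omega⟩,
      ⟨p.2 - a, by simp only [gappedPairs, mem_filter] at hp; omega⟩)) ?_ ?_ ?_ ?_
  all_goals
    intro p hp
    simp only [gappedPairs, mem_filter, mem_univ, true_and, Prod.ext_iff, Fin.ext_iff,
      Fin.lt_def] at hp ⊢
    omega

theorem card_gappedTriples (n a b : ℕ) : #(gappedTriples n a b) = (n - a - b).choose 3 := by
  rw [← card_filter_lt_lt]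
  symm
  refine card_bij'
    (fun t _ => (⟨t.1, by omega⟩, ⟨t.2.1 + a, by omega⟩, ⟨t.2.2 + a + b, by omega⟩))
    (fun t ht => (⟨t.1, by simp only [gappedTriples, mem_filter] at ht; omega⟩,
      ⟨t.2.1 - a, by simp only [gappedTriples, mem_filter] at ht; omega⟩,
      ⟨t.2.2 - a - b, by simp only [gappedTriples, mem_filter] at ht; omega⟩)) ?_ ?_ ?_ ?_
  all_goals
    intro t ht
    simp only [gappedTriples, mem_filter, mem_univ, true_and, Prod.ext_iff, Fin.ext_iff,
      Fin.lt_def] at ht ⊢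
    omega

theorem Qgraph_adj_iff {n : ℕ} {x : ℝ} {a b : Fin n} (h : a < b) :
    (Qgraph n x).Adj a b ↔ b.val ≤ a.val + ⌊(1 - √(1 - x)) * n⌋₊ := by
  have : a.val < b.val := h
  simp only [Qgraph, SimpleGraph.fromRel_adj, ne_eq, Fin.ext_iff]
  omega

section BandGraph

variable {n m : ℕ} {G : SimpleGraph (Fin n)}

theorem ecount_add_choose_eq (hG : ∀ a b : Fin n, a < b → (G.Adj a b ↔ b.val ≤ a.val + m)) :
    ecount G + (n - m).choose 2 = n.choose 2 := by
  have hsub : gappedPairs n m ⊆ gappedPairs n 0 := by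
    intro p; simp only [gappedPairs, mem_filter, mem_univ, true_and]; omega
  have hE : ecount G = #(gappedPairs n 0 \ gappedPairs n m) := by
    unfold ecount; congr 1; ext p
    simp only [gappedPairs, Finset.mem_sdiff, mem_filter, mem_univ, true_and, add_zero, not_lt]
    exact and_congr_right fun h => hG _ _ h
  rw [hE, ← card_gappedPairs, card_sdiff_add_card_eq_card hsub, card_gappedPairs, Nat.sub_zero]

theorem mcount_add_choose_eq (hG : ∀ a b : Fin n, a < b → (G.Adj a b ↔ b.val ≤ a.val + m)) :
    mcount G + 2 * (n - m).choose 3 = n.choose 3 + (n - 2 * m).choose 3 := by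
  have hsub : gappedTriples n m 0 ∪ gappedTriples n 0 m ⊆ gappedTriples n 0 0 := by
    intro t; simp only [gappedTriples, Finset.mem_union, mem_filter, mem_univ, true_and]; omega
  have hinter : gappedTriples n m 0 ∩ gappedTriples n 0 m = gappedTriples n m m := by
    ext t; simp only [gappedTriples, Finset.mem_inter, mem_filter, mem_univ, true_and]; omega
  have hM : mcount G = #(gappedTriples n 0 0 \ (gappedTriples n m 0 ∪ gappedTriples n 0 m)) := by
    unfold mcount; congr 1; ext t
    simp only [gappedTriples, Finset.mem_sdiff, Finset.mem_union, mem_filter, mem_univ,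
      true_and, add_zero]
    constructor
    · rintro ⟨h12, h23, ha, hb⟩
      rw [hG _ _ h12] at ha; rw [hG _ _ h23] at hb
      omega
    · rintro ⟨⟨h12, h23⟩, hout⟩
      rw [hG _ _ h12, hG _ _ h23]
      omega
  have hunion := card_union_add_card_inter (gappedTriples n m 0) (gappedTriples n 0 m)
  rw [hinter, card_gappedTriples, card_gappedTriples, card_gappedTriples] at hunion
  have hsdiff := card_sdiff_add_card_eq_card hsub
  rw [← hM, card_gappedTriples] at hsdiff
  simp only [Nat.sub_zero, ← two_mul] at hunion hsdiff
  rw [two_mul m, Nat.sub_add_eq]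
  omega

end BandGraph

theorem tendsto_cast_choose_div_pow (k : ℕ) {a : ℕ → ℕ} {c : ℝ}
    (ha : Tendsto (fun n => (a n : ℝ) / n) atTop (𝓝 c)) :
    Tendsto (fun n => ((a n).choose k : ℝ) / (n : ℝ) ^ k) atTop (𝓝 (c ^ k / k !)) := by
  have hfactor (j : ℕ) : Tendsto (fun n : ℕ => (a n : ℝ) / n - j / n) atTop (𝓝 c) := by
    simpa using ha.sub (tendsto_const_div_atTop_nhds_zero_nat (j : ℝ))
  have hprod := (tendsto_finsetProd (range k) fun j _ => hfactor j).div_const (k ! : ℝ)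
  rw [prod_const, card_range] at hprod
  refine hprod.congr fun n => ?_
  rw [Nat.cast_choose_eq_descPochhammer_div, descPochhammer_eval_eq_prod_range, div_right_comm]
  simp_rw [div_sub_div_same, prod_div_distrib, prod_const, card_range]

theorem tendsto_cast_choose_div_choose (k : ℕ) {a : ℕ → ℕ} {c : ℝ}
    (ha : Tendsto (fun n => (a n : ℝ) / n) atTop (𝓝 c)) :
    Tendsto (fun n => ((a n).choose k : ℝ) / n.choose k) atTop (𝓝 (c ^ k)) := by
  have hid : Tendsto (fun n : ℕ => (n : ℝ) / n) atTop (𝓝 1) :=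
    tendsto_const_nhds.congr' <| (eventually_ne_atTop 0).mono fun n hn =>
      (div_self (Nat.cast_ne_zero.mpr hn)).symm
  have hratio := (tendsto_cast_choose_div_pow k ha).div (tendsto_cast_choose_div_pow k hid)
    (by simp [Nat.factorial_ne_zero])
  rw [one_pow, div_div_div_cancel_right₀ (by simp [Nat.factorial_ne_zero]), div_one] at hratio
  refine hratio.congr' <| (eventually_ne_atTop 0).mono fun n hn => ?_
  rw [Pi.div_apply, div_div_div_cancel_right₀ (by simp [hn])]

theorem tendsto_cast_tsub_div {a : ℕ → ℕ} {c : ℝ}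
    (ha : Tendsto (fun n => (a n : ℝ) / n) atTop (𝓝 c)) :
    Tendsto (fun n => ((n - a n : ℕ) : ℝ) / n) atTop (𝓝 (max (1 - c) 0)) := by
  refine ((tendsto_const_nhds.sub ha).max tendsto_const_nhds).congr' <|
    (eventually_gt_atTop 0).mono fun n hn => ?_
  have hn' : (0 : ℝ) < n := by exact_mod_cast hn
  dsimp only
  rcases le_total (a n) n with h | h
  · rw [Nat.cast_sub h, sub_div, div_self hn'.ne', max_eq_left]
    rw [sub_nonneg, div_le_one hn']; exact_mod_cast h
  · rw [Nat.sub_eq_zero_of_le h, Nat.cast_zero, zero_div, max_eq_right]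
    rw [sub_nonpos, le_div_iff₀ hn', one_mul]; exact_mod_cast h

section Densities

variable {G : ∀ n, SimpleGraph (Fin n)} {m : ℕ → ℕ} {η : ℝ}

theorem tendsto_ecount_div_choose
    (hG : ∀ n (a b : Fin n), a < b → ((G n).Adj a b ↔ b.val ≤ a.val + m n))
    (hm : Tendsto (fun n => (m n : ℝ) / n) atTop (𝓝 η)) :
    Tendsto (fun n => (ecount (G n) : ℝ) / n.choose 2) atTop (𝓝 (1 - max (1 - η) 0 ^ 2)) := by
  refine ((tendsto_cast_choose_div_choose 2 (tendsto_cast_tsub_div hm)).const_sub 1).congr' <|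
    (eventually_ge_atTop 2).mono fun n hn => ?_
  have hcount : (ecount (G n) : ℝ) = n.choose 2 - (n - m n).choose 2 := by
    rw [eq_sub_iff_add_eq]; exact_mod_cast ecount_add_choose_eq (hG n)
  dsimp only
  rw [hcount, one_sub_div (Nat.cast_ne_zero.mpr (Nat.choose_pos hn).ne')]

theorem tendsto_mcount_div_choose
    (hG : ∀ n (a b : Fin n), a < b → ((G n).Adj a b ↔ b.val ≤ a.val + m n))
    (hm : Tendsto (fun n => (m n : ℝ) / n) atTop (𝓝 η)) :
    Tendsto (fun n => (mcount (G n) : ℝ) / n.choose 3) atTop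
      (𝓝 (1 - 2 * max (1 - η) 0 ^ 3 + max (1 - 2 * η) 0 ^ 3)) := by
  have hm2 : Tendsto (fun n => ((2 * m n : ℕ) : ℝ) / n) atTop (𝓝 (2 * η)) := by
    simpa only [Nat.cast_mul, Nat.cast_ofNat, mul_div_assoc] using hm.const_mul 2
  have hlim := ((tendsto_cast_choose_div_choose 3 (tendsto_cast_tsub_div hm)).const_mul 2
    |>.const_sub 1).add (tendsto_cast_choose_div_choose 3 (tendsto_cast_tsub_div hm2))
  refine hlim.congr' <| (eventually_ge_atTop 3).mono fun n hn => ?_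
  have hcount : (mcount (G n) : ℝ) = n.choose 3 - 2 * (n - m n).choose 3
      + (n - 2 * m n).choose 3 := by
    rw [sub_add_eq_add_sub, eq_sub_iff_add_eq]; exact_mod_cast mcount_add_choose_eq (hG n)
  have hC : (n.choose 3 : ℝ) ≠ 0 := Nat.cast_ne_zero.mpr (Nat.choose_pos hn).ne'
  dsimp only
  rw [hcount, add_div, sub_div, div_self hC, mul_div_assoc]

end Densities

/-- The edge density of `Q(n,x)` tends to `x`, and the density of the ordered path `M`
tends to `6η³ + 6(1-2η)η²` if `η ≤ 1/2` and to `2η³ - 6η² + 6η - 1` if `η ≥ 1/2`,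
where `η = 1 - √(1-x)`. -/
theorem Qgraph_densities (x : ℝ) (hx : x ∈ Set.Icc (0:ℝ) 1) :
    Filter.Tendsto (fun n : ℕ => (ecount (Qgraph n x) : ℝ) / (n.choose 2 : ℝ))
      Filter.atTop (nhds x) ∧
    ((1 - Real.sqrt (1 - x) ≤ 1/2 →
      Filter.Tendsto (fun n : ℕ => (mcount (Qgraph n x) : ℝ) / (n.choose 3 : ℝ))
        Filter.atTop
        (nhds (6 * (1 - Real.sqrt (1 - x))^3 +
          6 * (1 - 2 * (1 - Real.sqrt (1 - x))) * (1 - Real.sqrt (1 - x))^2))) ∧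
     (1/2 ≤ 1 - Real.sqrt (1 - x) →
      Filter.Tendsto (fun n : ℕ => (mcount (Qgraph n x) : ℝ) / (n.choose 3 : ℝ))
        Filter.atTop
        (nhds (2 * (1 - Real.sqrt (1 - x))^3 - 6 * (1 - Real.sqrt (1 - x))^2 +
          6 * (1 - Real.sqrt (1 - x)) - 1)))) := by
  obtain ⟨hx0, hx1⟩ := hx
  have hsq : √(1 - x) ^ 2 = 1 - x := Real.sq_sqrt (by linarith)
  have hsqrt_le : √(1 - x) ≤ 1 := Real.sqrt_le_one.mpr (by linarith)
  set η := 1 - √(1 - x) with hη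
  have hη1 : 1 - η = √(1 - x) := by rw [hη, sub_sub_cancel]
  have hm : Tendsto (fun n : ℕ => (⌊η * n⌋₊ : ℝ) / n) atTop (𝓝 η) :=
    (tendsto_nat_floor_mul_div_atTop (by linarith)).comp tendsto_natCast_atTop_atTop
  have hG (n : ℕ) (a b : Fin n) (h : a < b) := Qgraph_adj_iff (x := x) h
  have hmax : max (1 - η) 0 = 1 - η := max_eq_left (by rw [hη1]; positivity)
  refine ⟨?_, fun hhalf => ?_, fun hhalf => ?_⟩
  · have hedge := tendsto_ecount_div_choose hG hm
    rwa [hmax, hη1, hsq, sub_sub_cancel] at hedge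
  · convert tendsto_mcount_div_choose hG hm using 2
    rw [hmax, max_eq_left (by linarith)]
    ring
  · convert tendsto_mcount_div_choose hG hm using 2
    rw [hmax, max_eq_right (by linarith)]
    ring
end

section
/- For 2 ≤ s ≤ t and x_b, x_g ≥ 0 with sqrt(x_b) + sqrt(x_g) ≤ 1, the maximum asymptotic density I_3(K'_{s,t}, (x_b, x_g)) of the colored clique K'_{s,t} over 3-edge-colored complete graphs with blue density x_b and green density x_g equals x_b^{s/2} · x_g^{t/2} · binomial(s+t, s). -/
open Finset

-- A 3-edge-coloring of the complete graph on `Fin N`, colors `0 = blue`, `1 = green`,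
-- `2 = red`, given as a symmetric function on ordered pairs.
def IsSymmColoring {N : ℕ} (c : Fin N → Fin N → Fin 3) : Prop := ∀ u v, c u v = c v u

-- The number of pairs `u < v` receiving a given color.
open scoped Classical in
noncomputable def colorCount {N : ℕ} (c : Fin N → Fin N → Fin 3) (col : Fin 3) : ℕ :=
  (Finset.univ.filter fun p : Fin N × Fin N => p.1 < p.2 ∧ c p.1 p.2 = col).card

-- The number of copies of `K'_{s,t}` in a 3-colored complete graph: pairs of disjoint
-- vertex sets `(A, B)` with `|A| = s`, `|B| = t`, all pairs inside `A` blue, all pairs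
-- inside `B` green, and all pairs between `A` and `B` red.
open scoped Classical in
noncomputable def kstCopies (s t : ℕ) {N : ℕ} (c : Fin N → Fin N → Fin 3) : ℕ :=
  (Finset.univ.filter fun p : Finset (Fin N) × Finset (Fin N) =>
    p.1.card = s ∧ p.2.card = t ∧ Disjoint p.1 p.2 ∧
    (∀ u ∈ p.1, ∀ v ∈ p.1, u ≠ v → c u v = 0) ∧
    (∀ u ∈ p.2, ∀ v ∈ p.2, u ≠ v → c u v = 1) ∧
    (∀ u ∈ p.1, ∀ v ∈ p.2, c u v = 2)).card

-- `I₃(K'_{s,t}, (x_b, x_g))`: the supremum of limiting `K'_{s,t}`-densities over all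
-- good sequences of 3-colored complete graphs with blue density `x_b`, green density `x_g`.
noncomputable def I3 (s t : ℕ) (xb xg : ℝ) : ℝ :=
  sSup { y : ℝ | ∃ (V : ℕ → ℕ) (c : (n : ℕ) → Fin (V n) → Fin (V n) → Fin 3),
    (∀ n, IsSymmColoring (c n)) ∧
    Filter.Tendsto V Filter.atTop Filter.atTop ∧
    Filter.Tendsto (fun n => (colorCount (c n) 0 : ℝ) / ((V n).choose 2 : ℝ))
      Filter.atTop (nhds xb) ∧
    Filter.Tendsto (fun n => (colorCount (c n) 1 : ℝ) / ((V n).choose 2 : ℝ))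
      Filter.atTop (nhds xg) ∧
    Filter.Tendsto (fun n => (kstCopies s t (c n) : ℝ) / ((V n).choose (s + t) : ℝ))
      Filter.atTop (nhds y) }

/-!
The extremal colouring on `n` vertices is a blue clique on `⌊√x_b n⌋` vertices and a disjoint
green clique on `⌊√x_g n⌋` vertices, all other pairs red; it fits since `√x_b + √x_g ≤ 1`. As
`s, t ≥ 2`, its copies of `K'_{s,t}` are exactly an `s`-subset of the blue block paired with a
`t`-subset of the green block, giving density `√x_b^s √x_g^t C(s+t, s)` in the limit.

Conversely, a copy is determined by a blue `s`-clique and a green `t`-clique. By Kruskal–Katona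
a colour class with `m` pairs has at most `C(k, r)` monochromatic `r`-cliques for
`k ≈ √(2m) ≈ √x · n`, i.e. about `(√x · n)^r / r!` of them, which yields the same bound.
-/

open Filter Topology
open scoped FinsetFamily

theorem Finset.card_le_choose_of_card_shadow_iterate_lt {n r k i : ℕ}
    {𝒜 : Finset (Finset (Fin n))} (hir : i ≤ r) (hrk : r ≤ k)
    (h𝒜 : (𝒜 : Set (Finset (Fin n))).Sized r) (h : #(∂^[i] 𝒜) < k.choose (r - i)) :
    #𝒜 ≤ k.choose r := by
  by_cases hkn : k ≤ n
  · by_contra! hlt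
    exact (kruskal_katona_lovasz_form hir hrk hkn h𝒜 hlt.le).not_gt h
  · calc #𝒜 ≤ #(powersetCard r (univ : Finset (Fin n))) :=
          card_le_card fun A hA => mem_powersetCard.2 ⟨subset_univ A, h𝒜 hA⟩
      _ = n.choose r := by simp
      _ ≤ k.choose r := Nat.choose_le_choose r (by omega)

theorem Nat.lt_choose_two_sqrt_two_mul_add_two (m : ℕ) :
    m < (Nat.sqrt (2 * m) + 2).choose 2 := by
  have h := Nat.lt_succ_sqrt (2 * m)
  rw [Nat.choose_two_right, Nat.lt_div_iff_mul_lt' (Nat.even_mul_pred_self _).two_dvd,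
    show Nat.sqrt (2 * m) + 2 - 1 = Nat.sqrt (2 * m) + 1 from rfl]
  nlinarith

section MonoCliques

variable {N : ℕ} {κ : Type*}

open scoped Classical in
noncomputable def monoCliques (c : Fin N → Fin N → κ) (r : ℕ) (col : κ) :
    Finset (Finset (Fin N)) :=
  (powersetCard r univ).filter fun A => (A : Set (Fin N)).Pairwise fun u v => c u v = col

variable {c : Fin N → Fin N → κ} {r : ℕ} {col : κ}

@[simp]
theorem mem_monoCliques {A : Finset (Fin N)} :
    A ∈ monoCliques c r col ↔ #A = r ∧ (A : Set (Fin N)).Pairwise fun u v => c u v = col := by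
  simp [monoCliques]

theorem sized_monoCliques : (monoCliques c r col : Set (Finset (Fin N))).Sized r :=
  fun _ hA => (mem_monoCliques.1 hA).1

theorem shadow_iterate_monoCliques_subset (i : ℕ) :
    ∂^[i] (monoCliques c r col) ⊆ monoCliques c (r - i) col := by
  intro A hA
  obtain ⟨B, hB, hAB, hcard⟩ := mem_shadow_iterate_iff_exists_sdiff.1 hA
  rw [mem_monoCliques] at hB ⊢
  refine ⟨?_, hB.2.mono (coe_subset.2 hAB)⟩
  rw [card_sdiff_of_subset hAB, hB.1] at hcard
  have := card_le_card hAB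
  omega

theorem monoCliques_eq_powersetCard (hr : 2 ≤ r) {S : Finset (Fin N)}
    (hS : ∀ u v, c u v = col ↔ u ∈ S ∧ v ∈ S) :
    monoCliques c r col = powersetCard r S := by
  ext A
  rw [mem_monoCliques, mem_powersetCard]
  constructor
  · rintro ⟨hcard, hA⟩
    refine ⟨fun u hu => ?_, hcard⟩
    obtain ⟨v, hv, hvu⟩ := exists_mem_ne (hcard ▸ hr : 1 < #A) u
    exact ((hS u v).1 (hA hu hv hvu.symm)).1
  · rintro ⟨hAS, hcard⟩
    exact ⟨hcard, fun u hu v hv _ => (hS u v).2 ⟨hAS hu, hAS hv⟩⟩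

theorem card_monoCliques_le (hr : 2 ≤ r) :
    (#(monoCliques c r col) : ℝ) ≤ (√(2 * #(monoCliques c 2 col)) + r) ^ r / r.factorial := by
  classical
  set m := #(monoCliques c 2 col)
  set k := Nat.sqrt (2 * m) + r
  -- Kruskal–Katona: the `(r - 2)`-shadow of the `r`-cliques consists of monochromatic pairs,
  -- fewer than `C(k, 2)` of them, so there are at most `C(k, r)` cliques.
  have hshadow : #(∂^[r - 2] (monoCliques c r col)) < k.choose (r - (r - 2)) := by
    rw [Nat.sub_sub_self hr]
    calc #(∂^[r - 2] (monoCliques c r col)) ≤ m := by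
          simpa [Nat.sub_sub_self hr] using
            card_le_card (shadow_iterate_monoCliques_subset (c := c) (r := r) (col := col) (r - 2))
      _ < (Nat.sqrt (2 * m) + 2).choose 2 := Nat.lt_choose_two_sqrt_two_mul_add_two m
      _ ≤ k.choose 2 := Nat.choose_le_choose 2 (by omega)
  have hk : (k : ℝ) ≤ √(2 * m) + r := by
    have := Real.nat_sqrt_le_real_sqrt (a := 2 * m)
    simp only [k, Nat.cast_add, Nat.cast_mul, Nat.cast_ofNat] at this ⊢
    linarith
  calc (#(monoCliques c r col) : ℝ)
      ≤ k.choose r := mod_cast card_le_choose_of_card_shadow_iterate_lt (Nat.sub_le r 2)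
          (by omega) sized_monoCliques hshadow
    _ ≤ (k : ℝ) ^ r / r.factorial := Nat.choose_le_pow_div r k
    _ ≤ (√(2 * m) + r) ^ r / r.factorial := by gcongr

end MonoCliques

theorem colorCount_eq_card_monoCliques {N : ℕ} {c : Fin N → Fin N → Fin 3}
    (hc : IsSymmColoring c) (col : Fin 3) :
    colorCount c col = #(monoCliques c 2 col) := by
  classical
  refine card_nbij (fun p => {p.1, p.2}) ?_ ?_ ?_
  · rintro ⟨u, v⟩ huv
    simp only [coe_filter, mem_univ, true_and] at huv
    refine mem_monoCliques.2 ⟨card_pair huv.1.ne, ?_⟩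
    rw [coe_pair, Set.pairwise_pair]
    exact fun _ => ⟨huv.2, hc v u ▸ huv.2⟩
  · rintro ⟨u, v⟩ huv ⟨u', v'⟩ huv' h
    simp only [coe_filter, mem_univ, true_and] at huv huv'
    have := congrArg ((↑) : Finset (Fin N) → Set (Fin N)) h
    simp only [coe_pair, Set.pair_eq_pair_iff] at this
    rcases this with ⟨rfl, rfl⟩ | ⟨rfl, rfl⟩
    · rfl
    · exact absurd (huv.1.trans huv'.1) (lt_irrefl u)
  · intro A hA
    obtain ⟨hcard, hA⟩ := mem_monoCliques.1 hA
    obtain ⟨u, v, huv, rfl⟩ := card_eq_two.1 hcard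
    rw [coe_pair, Set.pairwise_pair] at hA
    rcases huv.lt_or_gt with h | h
    · exact ⟨(u, v), by simpa using ⟨h, (hA huv).1⟩, rfl⟩
    · exact ⟨(v, u), by simpa using ⟨h, (hA huv).2⟩, pair_comm v u⟩

theorem kstCopies_eq_card_filter (s t : ℕ) {N : ℕ} (c : Fin N → Fin N → Fin 3) :
    kstCopies s t c = #((monoCliques c s 0 ×ˢ monoCliques c t 1).filter fun p =>
      Disjoint p.1 p.2 ∧ ∀ u ∈ p.1, ∀ v ∈ p.2, c u v = 2) := by
  classical
  unfold kstCopies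
  congr 1
  ext p
  simp only [mem_filter, mem_univ, true_and, mem_product, mem_monoCliques]
  exact ⟨fun ⟨hs, ht, hd, h0, h1, h2⟩ => ⟨⟨⟨hs, h0⟩, ht, h1⟩, hd, h2⟩,
    fun ⟨⟨⟨hs, h0⟩, ht, h1⟩, hd, h2⟩ => ⟨hs, ht, hd, h0, h1, h2⟩⟩

theorem kstCopies_le {s t N : ℕ} {c : Fin N → Fin N → Fin 3} (hc : IsSymmColoring c)
    (hs : 2 ≤ s) (ht : 2 ≤ t) :
    (kstCopies s t c : ℝ) ≤ (√(2 * colorCount c 0) + s) ^ s / s.factorial *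
      ((√(2 * colorCount c 1) + t) ^ t / t.factorial) := by
  rw [colorCount_eq_card_monoCliques hc, colorCount_eq_card_monoCliques hc]
  calc (kstCopies s t c : ℝ) ≤ #(monoCliques c s 0) * #(monoCliques c t 1) := by
        rw [kstCopies_eq_card_filter, ← Nat.cast_mul, ← card_product]
        exact_mod_cast card_filter_le _ _
    _ ≤ _ := by gcongr <;> exact card_monoCliques_le ‹_›

section BlockColoring

variable {N : ℕ}

def blockColoring (B G : Finset (Fin N)) : Fin N → Fin N → Fin 3 := fun u v =>
  if u ∈ B ∧ v ∈ B then 0 else if u ∈ G ∧ v ∈ G then 1 else 2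

variable {B G : Finset (Fin N)}

theorem blockColoring_symm : IsSymmColoring (blockColoring B G) := by
  intro u v
  simp only [blockColoring, and_comm]

theorem monoCliques_blockColoring_zero {r : ℕ} (hr : 2 ≤ r) :
    monoCliques (blockColoring B G) r 0 = powersetCard r B :=
  monoCliques_eq_powersetCard hr fun u v => by unfold blockColoring; split_ifs <;> simp_all

theorem monoCliques_blockColoring_one (hBG : Disjoint B G) {r : ℕ} (hr : 2 ≤ r) :
    monoCliques (blockColoring B G) r 1 = powersetCard r G :=
  monoCliques_eq_powersetCard hr fun u v => by
    unfold blockColoring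
    split_ifs with h₀ h₁
    · simp [disjoint_left.1 hBG h₀.1]
    · simp [h₁]
    · simp [h₁]

theorem colorCount_blockColoring_zero : colorCount (blockColoring B G) 0 = (#B).choose 2 := by
  rw [colorCount_eq_card_monoCliques blockColoring_symm, monoCliques_blockColoring_zero le_rfl,
    card_powersetCard]

theorem colorCount_blockColoring_one (hBG : Disjoint B G) :
    colorCount (blockColoring B G) 1 = (#G).choose 2 := by
  rw [colorCount_eq_card_monoCliques blockColoring_symm, monoCliques_blockColoring_one hBG le_rfl,
    card_powersetCard]

theorem kstCopies_blockColoring (hBG : Disjoint B G) {s t : ℕ} (hs : 2 ≤ s) (ht : 2 ≤ t) :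
    kstCopies s t (blockColoring B G) = (#B).choose s * (#G).choose t := by
  rw [kstCopies_eq_card_filter, monoCliques_blockColoring_zero hs,
    monoCliques_blockColoring_one hBG ht, filter_true_of_mem, card_product, card_powersetCard,
    card_powersetCard]
  simp only [mem_product, mem_powersetCard, and_imp, Prod.forall]
  intro A D hAB _ hDG _
  refine ⟨hBG.mono hAB hDG, fun u hu v hv => ?_⟩
  simp [blockColoring, disjoint_right.1 hBG (hDG hv), disjoint_left.1 hBG (hAB hu)]

end BlockColoring

theorem exists_disjoint_card_eq {α : Type*} [Fintype α] [DecidableEq α] {b g : ℕ}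
    (h : b + g ≤ Fintype.card α) : ∃ B G : Finset α, Disjoint B G ∧ #B = b ∧ #G = g := by
  obtain ⟨S, -, hS⟩ := exists_subset_card_eq (s := (univ : Finset α)) (by simpa using h)
  obtain ⟨B, hBS, hB⟩ := exists_subset_card_eq (s := S) (n := b) (by omega)
  exact ⟨B, S \ B, disjoint_sdiff, hB, by rw [card_sdiff_of_subset hBS]; omega⟩

section Asymptotics

variable {f g : ℕ → ℕ}

theorem tendsto_choose_div_pow_s10 {α : ℝ}
    (hfg : Tendsto (fun n => (f n : ℝ) / g n) atTop (𝓝 α)) (hg : Tendsto g atTop atTop)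
    (r : ℕ) :
    Tendsto (fun n => ((f n).choose r : ℝ) / (g n : ℝ) ^ r) atTop
      (𝓝 (α ^ r / r.factorial)) := by
  have hg' : Tendsto (fun n => (g n : ℝ)) atTop atTop := tendsto_natCast_atTop_atTop.comp hg
  have hlow : Tendsto (fun n => ((f n + 1 - r : ℕ) : ℝ) / g n) atTop (𝓝 α) := by
    refine tendsto_of_tendsto_of_tendsto_of_le_of_le
      (by simpa using hfg.sub (tendsto_const_nhds (x := (r : ℝ)).div_atTop hg'))
      (by simpa using hfg.add (tendsto_const_nhds (x := (1 : ℝ)).div_atTop hg')) (fun n => ?_)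
      (fun n => ?_)
    · rw [← sub_div]
      gcongr
      rw [sub_le_iff_le_add]
      exact (Nat.cast_le.2 (by omega : f n ≤ f n + 1 - r + r)).trans_eq (Nat.cast_add _ _)
    · rw [← one_div, ← add_div]
      gcongr
      exact (Nat.cast_le.2 (Nat.sub_le (f n + 1) r)).trans_eq (Nat.cast_succ _)
  refine tendsto_of_tendsto_of_tendsto_of_le_of_le ((hlow.pow r).div_const _)
    ((hfg.pow r).div_const _) (fun n => ?_) (fun n => ?_)
  · rw [div_pow, div_right_comm]
    gcongr
    exact Nat.pow_le_choose r (f n)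
  · rw [div_pow, div_right_comm]
    gcongr
    exact Nat.choose_le_pow_div r (f n)

theorem tendsto_choose_div_pow_self (hg : Tendsto g atTop atTop) (r : ℕ) :
    Tendsto (fun n => ((g n).choose r : ℝ) / (g n : ℝ) ^ r) atTop (𝓝 (1 / r.factorial)) := by
  have hgg : Tendsto (fun n => (g n : ℝ) / g n) atTop (𝓝 1) :=
    tendsto_const_nhds.congr' <| (hg.eventually_gt_atTop 0).mono fun n hn =>
      (div_self (by positivity)).symm
  simpa using tendsto_choose_div_pow_s10 hgg hg r

theorem tendsto_choose_div_choose {α : ℝ}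
    (hfg : Tendsto (fun n => (f n : ℝ) / g n) atTop (𝓝 α)) (hg : Tendsto g atTop atTop)
    (r : ℕ) :
    Tendsto (fun n => ((f n).choose r : ℝ) / (g n).choose r) atTop (𝓝 (α ^ r)) := by
  have := (tendsto_choose_div_pow_s10 hfg hg r).div (tendsto_choose_div_pow_self hg r)
    (by positivity)
  rw [div_div_div_cancel_right₀ (by positivity), div_one] at this
  refine this.congr' ((hg.eventually_gt_atTop 0).mono fun n hn => ?_)
  exact div_div_div_cancel_right₀ (by positivity) _ _

theorem tendsto_sqrt_two_mul_add_div {e : ℕ → ℕ} {x : ℝ}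
    (he : Tendsto (fun n => (e n : ℝ) / (g n).choose 2) atTop (𝓝 x))
    (hg : Tendsto g atTop atTop) (a : ℝ) :
    Tendsto (fun n => (√(2 * e n) + a) / g n) atTop (𝓝 √x) := by
  have hsq : Tendsto (fun n => 2 * e n / (g n : ℝ) ^ 2) atTop (𝓝 x) := by
    have := (he.mul (tendsto_choose_div_pow_self hg 2)).const_mul 2
    rw [show 2 * (x * (1 / ((2 : ℕ).factorial : ℝ))) = x by
      rw [Nat.factorial_two, Nat.cast_ofNat]; ring] at this
    refine this.congr' ((hg.eventually_ge_atTop 2).mono fun n hn => ?_)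
    have : ((g n).choose 2 : ℝ) ≠ 0 := Nat.cast_ne_zero.2 (Nat.choose_pos hn).ne'
    have : (g n : ℝ) ≠ 0 := Nat.cast_ne_zero.2 (by omega)
    field_simp
  have := hsq.sqrt.add (tendsto_const_nhds (x := a).div_atTop
    (tendsto_natCast_atTop_atTop.comp hg))
  rw [add_zero] at this
  refine this.congr' ((hg.eventually_gt_atTop 0).mono fun n hn => ?_)
  have : (0 : ℝ) < g n := by positivity
  simp only [Function.comp_apply]
  rw [Real.sqrt_div' _ (by positivity), Real.sqrt_sq this.le, add_div]

end Asymptotics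

theorem le_of_tendsto_kstCopies_density {s t : ℕ} (hs : 2 ≤ s) (ht : 2 ≤ t) {xb xg y : ℝ}
    {V : ℕ → ℕ} {c : (n : ℕ) → Fin (V n) → Fin (V n) → Fin 3}
    (hc : ∀ n, IsSymmColoring (c n)) (hV : Tendsto V atTop atTop)
    (hb : Tendsto (fun n => (colorCount (c n) 0 : ℝ) / (V n).choose 2) atTop (𝓝 xb))
    (hg : Tendsto (fun n => (colorCount (c n) 1 : ℝ) / (V n).choose 2) atTop (𝓝 xg))
    (hy : Tendsto (fun n => (kstCopies s t (c n) : ℝ) / (V n).choose (s + t)) atTop (𝓝 y)) :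
    y ≤ √xb ^ s * √xg ^ t * (s + t).choose s := by
  set A := fun n => (√(2 * colorCount (c n) 0) + s) / V n
  set B := fun n => (√(2 * colorCount (c n) 1) + t) / V n
  have hbound : ∀ᶠ n in atTop, (kstCopies s t (c n) : ℝ) / (V n).choose (s + t) ≤
      A n ^ s / s.factorial * (B n ^ t / t.factorial) /
        ((V n).choose (s + t) / (V n : ℝ) ^ (s + t)) := by
    filter_upwards [hV.eventually_ge_atTop (s + t)] with n hn
    have hC : (0 : ℝ) < (V n).choose (s + t) := Nat.cast_pos.2 (Nat.choose_pos hn)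
    have hV0 : (V n : ℝ) ≠ 0 := Nat.cast_ne_zero.2 (by omega)
    calc (kstCopies s t (c n) : ℝ) / (V n).choose (s + t)
        ≤ (√(2 * colorCount (c n) 0) + s) ^ s / s.factorial *
            ((√(2 * colorCount (c n) 1) + t) ^ t / t.factorial) / (V n).choose (s + t) :=
          div_le_div_of_nonneg_right (kstCopies_le (hc n) hs ht) hC.le
      _ = _ := by
          simp only [A, B, div_pow, pow_add]
          field_simp
  have hblue := ((tendsto_sqrt_two_mul_add_div hb hV s).pow s).div_const (s.factorial : ℝ)
  have hgreen := ((tendsto_sqrt_two_mul_add_div hg hV t).pow t).div_const (t.factorial : ℝ)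
  have hlim := (hblue.mul hgreen).div (tendsto_choose_div_pow_self hV (s + t)) (by positivity)
  calc y ≤ √xb ^ s / s.factorial * (√xg ^ t / t.factorial) / (1 / (s + t).factorial) :=
        le_of_tendsto_of_tendsto hy hlim hbound
    _ = _ := by
        rw [Nat.cast_add_choose]
        field_simp

theorem exists_blockColorings {a b : ℝ} (ha : 0 ≤ a) (hb : 0 ≤ b) (hab : a + b ≤ 1) {s t : ℕ}
    (hs : 2 ≤ s) (ht : 2 ≤ t) :
    ∃ c : (n : ℕ) → Fin n → Fin n → Fin 3, (∀ n, IsSymmColoring (c n)) ∧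
      Tendsto (fun n => (colorCount (c n) 0 : ℝ) / n.choose 2) atTop (𝓝 (a ^ 2)) ∧
      Tendsto (fun n => (colorCount (c n) 1 : ℝ) / n.choose 2) atTop (𝓝 (b ^ 2)) ∧
      Tendsto (fun n => (kstCopies s t (c n) : ℝ) / n.choose (s + t)) atTop
        (𝓝 (a ^ s * b ^ t * (s + t).choose s)) := by
  have hfloor (n : ℕ) : ⌊a * n⌋₊ + ⌊b * n⌋₊ ≤ Fintype.card (Fin n) := by
    have := Nat.floor_le (mul_nonneg ha n.cast_nonneg)
    have := Nat.floor_le (mul_nonneg hb n.cast_nonneg)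
    rw [Fintype.card_fin, ← Nat.cast_le (α := ℝ)]
    push_cast
    nlinarith [n.cast_nonneg (α := ℝ)]
  choose B G hBG hB hG using fun n => exists_disjoint_card_eq (hfloor n)
  have hfa : Tendsto (fun n : ℕ => (⌊a * n⌋₊ : ℝ) / n) atTop (𝓝 a) :=
    (tendsto_nat_floor_mul_div_atTop ha).comp tendsto_natCast_atTop_atTop
  have hfb : Tendsto (fun n : ℕ => (⌊b * n⌋₊ : ℝ) / n) atTop (𝓝 b) :=
    (tendsto_nat_floor_mul_div_atTop hb).comp tendsto_natCast_atTop_atTop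
  refine ⟨fun n => blockColoring (B n) (G n), fun n => blockColoring_symm, ?_, ?_, ?_⟩
  · simpa only [colorCount_blockColoring_zero, hB, id] using
      tendsto_choose_div_choose (g := id) hfa tendsto_id 2
  · simpa only [colorCount_blockColoring_one (hBG _), hG, id] using
      tendsto_choose_div_choose (g := id) hfb tendsto_id 2
  · have := ((tendsto_choose_div_pow_s10 (g := id) hfa tendsto_id s).mul
      (tendsto_choose_div_pow_s10 (g := id) hfb tendsto_id t)).div
      (tendsto_choose_div_pow_self tendsto_id (s + t)) (by positivity)
    rw [show a ^ s / s.factorial * (b ^ t / t.factorial) / (1 / (s + t).factorial) =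
      a ^ s * b ^ t * (s + t).choose s by rw [Nat.cast_add_choose]; field_simp] at this
    refine this.congr' ((eventually_gt_atTop 0).mono fun n hn => ?_)
    have : (n : ℝ) ≠ 0 := Nat.cast_ne_zero.2 hn.ne'
    simp only [Pi.div_apply, id, kstCopies_blockColoring (hBG n) hs ht, hB, hG, Nat.cast_mul,
      pow_add]
    field_simp

/-- For `2 ≤ s ≤ t` and `√x_b + √x_g ≤ 1`,
`I₃(K'_{s,t}, (x_b, x_g)) = x_b^{s/2} · x_g^{t/2} · C(s+t, s)`. -/
theorem I3_eq_of_sqrt_le (s t : ℕ) (hs : 2 ≤ s) (hst : s ≤ t) (xb xg : ℝ)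
    (hxb : 0 ≤ xb) (hxg : 0 ≤ xg) (h : Real.sqrt xb + Real.sqrt xg ≤ 1) :
    I3 s t xb xg = xb ^ ((s : ℝ) / 2) * xg ^ ((t : ℝ) / 2) * ((s + t).choose s : ℝ) := by
  have ht : 2 ≤ t := hs.trans hst
  rw [Real.rpow_div_two_eq_sqrt _ hxb, Real.rpow_div_two_eq_sqrt _ hxg, Real.rpow_natCast,
    Real.rpow_natCast]
  refine IsGreatest.csSup_eq ⟨?_, ?_⟩
  · obtain ⟨c, hc, hb, hg, hy⟩ :=
      exists_blockColorings (Real.sqrt_nonneg xb) (Real.sqrt_nonneg xg) h hs ht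
    rw [Real.sq_sqrt hxb] at hb
    rw [Real.sq_sqrt hxg] at hg
    exact ⟨id, c, hc, tendsto_id, hb, hg, hy⟩
  · rintro y ⟨V, c, hc, hV, hb, hg, hy⟩
    exact le_of_tendsto_kstCopies_density hs ht hc hV hb hg hy
end

section
/- For each γ ∈ [0,1], a clique on a sqrt(γ)-fraction of the vertices (with remaining vertices isolated) has asymptotic S_k-density γ^{(k+1)/2}: precisely, if G_n consists of a clique on floor(sqrt(γ)·n) vertices plus isolated vertices, then the edge density of G_n tends to γ and ρ(S_k, G_n) = N(S_k, G_n)·k!/(n)_{k+1} tends to γ^{(k+1)/2}. -/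
open Finset

-- The degree of a vertex.
open scoped Classical in
noncomputable def deg {n : ℕ} (G : SimpleGraph (Fin n)) (v : Fin n) : ℕ :=
  (Finset.univ.filter fun w => G.Adj v w).card

-- `N(S_k, G) = ∑_v C(d(v), k)`, the number of copies of the `k`-edge star.
noncomputable def starCount {n : ℕ} (G : SimpleGraph (Fin n)) (k : ℕ) : ℕ :=
  ∑ v : Fin n, (deg G v).choose k

-- `ρ(S_k, G) = N(S_k, G)·k!/(n)_{k+1}`, the `S_k`-density of a graph on `n` vertices.
noncomputable def starDensity {n : ℕ} (G : SimpleGraph (Fin n)) (k : ℕ) : ℝ :=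
  (starCount G k * k.factorial : ℝ) / (n.descFactorial (k + 1) : ℝ)

-- A clique on the first `⌊√γ·n⌋` vertices, with the remaining vertices isolated.
noncomputable def cliquePlusIsolated (n : ℕ) (γ : ℝ) : SimpleGraph (Fin n) :=
  SimpleGraph.fromRel fun v w =>
    v.val < ⌊Real.sqrt γ * (n : ℝ)⌋₊ ∧ w.val < ⌊Real.sqrt γ * (n : ℝ)⌋₊

/-!
Every vertex of a clique on `m` vertices has degree `m - 1`, so the clique contributes
`N(S_k) · k! = m · (m - 1)_k = (m)_{k+1}` and `ρ(S_k)` is the ratio `(m)_{k+1} / (n)_{k+1}`.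
With `m = ⌊√γ n⌋` each of the `k + 1` factors `(m - i) / (n - i)` tends to `√γ`.
The edge density is `ρ(S_1)`, by the handshake lemma.
-/

open Filter Topology

lemma starCount_one_eq_two_mul_ecount {n : ℕ} (G : SimpleGraph (Fin n)) :
    starCount G 1 = 2 * ecount G := by
  classical
  have hdarts : starCount G 1 = #{p : Fin n × Fin n | G.Adj p.1 p.2} := by
    simp only [starCount, Nat.choose_one_right, deg, card_filter, Fintype.sum_prod_type]
  have hsplit : ({p | G.Adj p.1 p.2} : Finset (Fin n × Fin n)) =
      ({p | p.1 < p.2 ∧ G.Adj p.1 p.2} : Finset (Fin n × Fin n)) ∪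
        ({p | p.2 < p.1 ∧ G.Adj p.1 p.2} : Finset (Fin n × Fin n)) := by
    ext p
    simp only [mem_filter, mem_univ, true_and, mem_union, ← or_and_right, iff_and_self]
    exact fun h => lt_or_gt_of_ne (G.ne_of_adj h)
  have hswap : #{p : Fin n × Fin n | p.2 < p.1 ∧ G.Adj p.1 p.2} = ecount G := by
    refine card_nbij' Prod.swap Prod.swap ?_ ?_ (fun _ _ => rfl) (fun _ _ => rfl) <;>
      intro p hp <;> simp_all [G.adj_comm]
  rw [hdarts, hsplit, card_union_of_disjoint (disjoint_filter.2 fun p _ h h' => lt_asymm h.1 h'.1),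
    hswap, two_mul]
  rfl

lemma ecount_div_choose_two_eq_starDensity_one {n : ℕ} (G : SimpleGraph (Fin n)) :
    (ecount G : ℝ) / n.choose 2 = starDensity G 1 := by
  rw [starDensity, starCount_one_eq_two_mul_ecount, Nat.descFactorial_eq_factorial_mul_choose]
  push_cast
  simp [Nat.factorial, mul_div_mul_left]

def cliqueOn (n m : ℕ) : SimpleGraph (Fin n) :=
  SimpleGraph.fromRel fun v w => v.val < m ∧ w.val < m

lemma cliqueOn_adj {n m : ℕ} {v w : Fin n} :
    (cliqueOn n m).Adj v w ↔ v ≠ w ∧ v.val < m ∧ w.val < m := by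
  simp only [cliqueOn, SimpleGraph.fromRel_adj]
  tauto

lemma deg_cliqueOn {n m : ℕ} (hmn : m ≤ n) (v : Fin n) :
    deg (cliqueOn n m) v = if v.val < m then m - 1 else 0 := by
  classical
  split_ifs with hv
  · have hnbhd : ({w | (cliqueOn n m).Adj v w} : Finset (Fin n)) =
        ({w | w.val < m} : Finset (Fin n)).erase v := by
      ext w
      simp [cliqueOn_adj, hv, ne_comm]
    rw [deg, hnbhd, card_erase_of_mem (by simpa), Fin.card_filter_val_lt, min_eq_right hmn]
  · rw [deg, card_eq_zero, filter_eq_empty_iff]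
    exact fun w _ h => hv (cliqueOn_adj.1 h).2.1

lemma starCount_cliqueOn_mul_factorial {n m k : ℕ} (hmn : m ≤ n) (hk : k ≠ 0) :
    starCount (cliqueOn n m) k * k.factorial = m.descFactorial (k + 1) := by
  classical
  have hchoose (v : Fin n) :
      (deg (cliqueOn n m) v).choose k = if v.val < m then (m - 1).choose k else 0 := by
    rw [deg_cliqueOn hmn]
    split_ifs
    · rfl
    · exact Nat.choose_eq_zero_of_lt (Nat.pos_of_ne_zero hk)
  rw [starCount, sum_congr rfl fun v _ => hchoose v, sum_ite, sum_const_zero, sum_const,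
    smul_eq_mul, add_zero, Fin.card_filter_val_lt, min_eq_right hmn]
  obtain _ | m := m
  · simp
  · rw [Nat.add_sub_cancel, Nat.succ_descFactorial_succ, Nat.descFactorial_eq_factorial_mul_choose]
    ring

lemma starDensity_cliqueOn {n m k : ℕ} (hmn : m ≤ n) (hk : k ≠ 0) :
    starDensity (cliqueOn n m) k = (m.descFactorial (k + 1) : ℝ) / n.descFactorial (k + 1) := by
  rw [starDensity, ← Nat.cast_mul, starCount_cliqueOn_mul_factorial hmn hk]

lemma tendsto_natCast_sub_div {u : ℕ → ℕ} {c : ℝ}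
    (hu : Tendsto (fun n => (u n : ℝ) / n) atTop (𝓝 c)) (i : ℕ) :
    Tendsto (fun n => ((u n - i : ℕ) : ℝ) / n) atTop (𝓝 c) := by
  have hlower : Tendsto (fun n : ℕ => (u n : ℝ) / n - i / n) atTop (𝓝 c) := by
    simpa using hu.sub (tendsto_const_div_atTop_nhds_zero_nat (i : ℝ))
  refine tendsto_of_tendsto_of_tendsto_of_le_of_le hlower hu (fun n => ?_) (fun n => ?_)
  · rw [← sub_div]
    gcongr
    rw [sub_le_iff_le_add, ← Nat.cast_add, Nat.cast_le]
    exact le_tsub_add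
  · gcongr
    exact_mod_cast Nat.sub_le _ _

lemma tendsto_descFactorial_div_pow {u : ℕ → ℕ} {c : ℝ}
    (hu : Tendsto (fun n => (u n : ℝ) / n) atTop (𝓝 c)) (j : ℕ) :
    Tendsto (fun n => ((u n).descFactorial j : ℝ) / n ^ j) atTop (𝓝 (c ^ j)) := by
  have hprod (n : ℕ) :
      ((u n).descFactorial j : ℝ) / n ^ j = ∏ i ∈ range j, ((u n - i : ℕ) : ℝ) / n := by
    rw [prod_div_distrib, Nat.descFactorial_eq_prod_range, prod_const, card_range]
    push_cast
    rfl
  simp only [hprod]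
  simpa using tendsto_finsetProd (range j) fun i _ => tendsto_natCast_sub_div hu i

lemma tendsto_descFactorial_floor_mul_div_descFactorial {c : ℝ} (hc : 0 ≤ c) (j : ℕ) :
    Tendsto (fun n : ℕ => (⌊c * n⌋₊.descFactorial j : ℝ) / n.descFactorial j)
      atTop (𝓝 (c ^ j)) := by
  have hfloor : Tendsto (fun n : ℕ => (⌊c * n⌋₊ : ℝ) / n) atTop (𝓝 c) :=
    (tendsto_nat_floor_mul_div_atTop hc).comp tendsto_natCast_atTop_atTop
  have hid : Tendsto (fun n : ℕ => (n : ℝ) / n) atTop (𝓝 1) := by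
    refine tendsto_const_nhds.congr' ?_
    filter_upwards [eventually_ne_atTop 0] with n hn
    exact (div_self (Nat.cast_ne_zero.2 hn)).symm
  have hquot :=
    (tendsto_descFactorial_div_pow hfloor j).div (tendsto_descFactorial_div_pow hid j) (by simp)
  rw [one_pow, div_one] at hquot
  refine hquot.congr' ?_
  filter_upwards [eventually_ne_atTop 0] with n hn
  exact div_div_div_cancel_right₀ (by positivity) _ _

/-- A clique on a `√γ`-fraction of the vertices plus isolated vertices has edge density
tending to `γ` and `S_k`-density tending to `γ^{(k+1)/2}`. -/
theorem clique_starDensity (γ : ℝ) (hγ : γ ∈ Set.Icc (0:ℝ) 1) (k : ℕ) (hk : 0 < k) :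
    Filter.Tendsto (fun n : ℕ => (ecount (cliquePlusIsolated n γ) : ℝ) / (n.choose 2 : ℝ))
      Filter.atTop (nhds γ) ∧
    Filter.Tendsto (fun n : ℕ => starDensity (cliquePlusIsolated n γ) k)
      Filter.atTop (nhds (γ ^ (((k : ℝ) + 1) / 2))) := by
  obtain ⟨hγ0, hγ1⟩ := hγ
  have hclique (n : ℕ) : ⌊√γ * n⌋₊ ≤ n :=
    Nat.floor_le_of_le (mul_le_of_le_one_left n.cast_nonneg (Real.sqrt_le_one.2 hγ1))
  have hdensity : ∀ j ≠ 0, Tendsto (fun n : ℕ => starDensity (cliquePlusIsolated n γ) j)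
      atTop (𝓝 (γ ^ (((j : ℝ) + 1) / 2))) := by
    intro j hj
    have hpow : √γ ^ (j + 1) = γ ^ (((j : ℝ) + 1) / 2) := by
      rw [Real.sqrt_eq_rpow, ← Real.rpow_natCast, ← Real.rpow_mul hγ0]
      push_cast
      ring_nf
    rw [← hpow]
    refine (tendsto_descFactorial_floor_mul_div_descFactorial (Real.sqrt_nonneg γ) (j + 1)).congr
      fun n => ?_
    exact (starDensity_cliqueOn (hclique n) hj).symm
  refine ⟨?_, hdensity k hk.ne'⟩
  simpa [ecount_div_choose_two_eq_starDensity_one] using hdensity 1 one_ne_zero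
end

section
/- Let W be a step graphon with k parts of measures α_1,...,α_k > 0 and values β_{ij}, with part degrees d_1 ≤ ... ≤ d_k where d_i = Σ_j α_j β_{ij}. Fix i and r < s with β_{ir} > 0 and β_{is} < 1, and define the perturbation W_ε = W + εQ where Q takes value -(1+δ_{ir})α_s on P_i×P_r ∪ P_r×P_i, value (1+δ_{is})α_r on P_i×P_s ∪ P_s×P_i, and 0 elsewhere (δ is the Kronecker delta). Then for ε > 0 small enough that W_ε has values in [0,1]: (a) the edge density t(|, W_ε) = t(|, W); (b) the degrees satisfy d'_r = d_r - α_iα_sε, d'_s = d_s + α_iα_rε, and d'_j = d_j for j ∉ {r,s}; (c) T(W_ε) - T(W) = 2εα_iα_rα_s(d_s - d_r) + ε²α_i²α_rα_s(α_r+α_s) > 0, where T(V) = Σ_j α_j d_V(j)². -/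
open Finset

/-- Degree-perturbation of a step graphon with parts of measures `α j` and values
`β p q`, part degrees `d j = ∑ m, α m · β j m` with `d` monotone. For `r < s` with
`β i r > 0` and `β i s < 1`, perturbing by `ε·Q` (with `Q` defined via Kronecker deltas)
preserves the edge density, changes the degrees of parts `r` and `s` by `-α_iα_sε` and
`+α_iα_rε` (leaving the others unchanged), and strictly increases `T(W) = ∑ α_j d_j²`
by `2εα_iα_rα_s(d_s - d_r) + ε²α_i²α_rα_s(α_r + α_s)`. -/
theorem step_graphon_perturbation (k : ℕ) (α : Fin k → ℝ) (β : Fin k → Fin k → ℝ)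
    (hα : ∀ j, 0 < α j) (hαsum : ∑ j, α j = 1)
    (hβsym : ∀ p q, β p q = β q p) (hβ : ∀ p q, β p q ∈ Set.Icc (0:ℝ) 1)
    (d : Fin k → ℝ) (hd : ∀ j, d j = ∑ m, α m * β j m) (hmono : Monotone d)
    (i r s : Fin k) (hrs : r < s) (hir : 0 < β i r) (his : β i s < 1)
    (ε : ℝ) (hε : 0 < ε)
    (Q : Fin k → Fin k → ℝ)
    (hQ : ∀ p q, Q p q =
      if (p = i ∧ q = r) ∨ (p = r ∧ q = i) then
        -((1 + (if i = r then (1:ℝ) else 0)) * α s)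
      else if (p = i ∧ q = s) ∨ (p = s ∧ q = i) then
        (1 + (if i = s then (1:ℝ) else 0)) * α r
      else 0)
    (hrange : ∀ p q, β p q + ε * Q p q ∈ Set.Icc (0:ℝ) 1)
    (d' : Fin k → ℝ) (hd' : ∀ j, d' j = ∑ m, α m * (β j m + ε * Q j m)) :
    (∑ p, ∑ q, α p * α q * (β p q + ε * Q p q)) = (∑ p, ∑ q, α p * α q * β p q) ∧
    d' r = d r - α i * α s * ε ∧
    d' s = d s + α i * α r * ε ∧
    (∀ j, j ≠ r → j ≠ s → d' j = d j) ∧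
    (∑ j, α j * (d' j) ^ 2) - (∑ j, α j * (d j) ^ 2) =
      2 * ε * α i * α r * α s * (d s - d r) +
        ε ^ 2 * (α i) ^ 2 * α r * α s * (α r + α s) ∧
    0 < (∑ j, α j * (d' j) ^ 2) - (∑ j, α j * (d j) ^ 2) := by
  have hrs' : r ≠ s := ne_of_lt hrs
  -- Q as sum of delta products
  have hQform : ∀ p q, Q p q =
      -(α s) * ((if p = i then (1:ℝ) else 0) * (if q = r then (1:ℝ) else 0)
              + (if p = r then (1:ℝ) else 0) * (if q = i then (1:ℝ) else 0))
      + α r * ((if p = i then (1:ℝ) else 0) * (if q = s then (1:ℝ) else 0)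
              + (if p = s then (1:ℝ) else 0) * (if q = i then (1:ℝ) else 0)) := by
    intro p q
    rw [hQ]
    clear hQ hrange hd' hd hβ hβsym hmono hαsum hα hir his hε
    by_cases h1 : p = i <;> by_cases h2 : p = r <;> by_cases h3 : p = s <;>
      by_cases h4 : q = i <;> by_cases h5 : q = r <;> by_cases h6 : q = s <;>
      simp_all <;> ring
  have key : ∀ j, ∑ m, α m * Q j m =
      (if j = r then -(α i * α s) else 0) + (if j = s then α i * α r else 0) := by
    intro j
    have e : ∀ m, α m * Q j m =
        (if m = r then -(α s) * (if j = i then (1:ℝ) else 0) * α m else 0)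
      + (if m = i then -(α s) * (if j = r then (1:ℝ) else 0) * α m else 0)
      + (if m = s then α r * (if j = i then (1:ℝ) else 0) * α m else 0)
      + (if m = i then α r * (if j = s then (1:ℝ) else 0) * α m else 0) := by
      intro m
      rw [hQform]
      split_ifs <;> ring
    rw [Finset.sum_congr rfl fun m _ => e m]
    simp only [Finset.sum_add_distrib, Finset.sum_ite_eq', Finset.mem_univ, if_true]
    clear hQ hQform hrange hd' hd hβ hβsym hmono hαsum hα hir his hε
    by_cases h1 : j = i <;> by_cases h2 : j = r <;> by_cases h3 : j = s <;>
      simp_all <;> ring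
  have hd'd : ∀ j, d' j = d j + ε *
      ((if j = r then -(α i * α s) else 0) + (if j = s then α i * α r else 0)) := by
    intro j
    rw [hd', Finset.sum_congr rfl fun m _ =>
      (by ring : α m * (β j m + ε * Q j m) = α m * β j m + ε * (α m * Q j m)),
      Finset.sum_add_distrib, ← Finset.mul_sum, key, hd]
  have hbr : d' r = d r - α i * α s * ε := by
    rw [hd'd r, if_pos rfl, if_neg hrs']; ring
  have hbs : d' s = d s + α i * α r * ε := by
    rw [hd'd s, if_neg (Ne.symm hrs'), if_pos rfl]; ring
  have hbj : ∀ j, j ≠ r → j ≠ s → d' j = d j := by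
    intro j h1 h2
    rw [hd'd j, if_neg h1, if_neg h2]; ring
  have ha : (∑ p, ∑ q, α p * α q * (β p q + ε * Q p q)) = (∑ p, ∑ q, α p * α q * β p q) := by
    have l1 : ∀ p, ∑ q, α p * α q * (β p q + ε * Q p q) = α p * d' p := by
      intro p; rw [hd', Finset.mul_sum]
      exact Finset.sum_congr rfl fun q _ => by ring
    have l2 : ∀ p, ∑ q, α p * α q * β p q = α p * d p := by
      intro p; rw [hd, Finset.mul_sum]
      exact Finset.sum_congr rfl fun q _ => by ring
    rw [Finset.sum_congr rfl fun p _ => l1 p, Finset.sum_congr rfl fun p _ => l2 p]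
    have e : ∀ p, α p * d' p = α p * d p
        + ((if p = r then α p * (ε * -(α i * α s)) else 0)
         + (if p = s then α p * (ε * (α i * α r)) else 0)) := by
      intro p; rw [hd'd p]; split_ifs <;> ring
    rw [Finset.sum_congr rfl fun p _ => e p, Finset.sum_add_distrib,
      Finset.sum_add_distrib]
    simp only [Finset.sum_ite_eq', Finset.mem_univ, if_true]
    ring
  have hc : (∑ j, α j * (d' j) ^ 2) - (∑ j, α j * (d j) ^ 2) =
      2 * ε * α i * α r * α s * (d s - d r) +
        ε ^ 2 * (α i) ^ 2 * α r * α s * (α r + α s) := by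
    have e : ∀ j, α j * (d' j) ^ 2 - α j * (d j) ^ 2 =
        (if j = r then α r * (2 * d r * (ε * -(α i * α s)) + (ε * -(α i * α s)) ^ 2) else 0)
      + (if j = s then α s * (2 * d s * (ε * (α i * α r)) + (ε * (α i * α r)) ^ 2) else 0) := by
      intro j
      rw [hd'd j]
      by_cases h1 : j = r <;> by_cases h2 : j = s
      · exact absurd (h1 ▸ h2) hrs'
      · subst h1; simp [hrs']; ring
      · subst h2; simp [Ne.symm hrs']; ring
      · simp [h1, h2]
    rw [← Finset.sum_sub_distrib, Finset.sum_congr rfl fun j _ => e j,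
      Finset.sum_add_distrib]
    simp only [Finset.sum_ite_eq', Finset.mem_univ, if_true]
    ring
  refine ⟨ha, hbr, hbs, hbj, hc, ?_⟩
  rw [hc]
  have hds : d r ≤ d s := hmono hrs.le
  have h1 : 0 ≤ 2 * ε * α i * α r * α s * (d s - d r) := by
    have := hα i; have := hα r; have := hα s
    have : (0:ℝ) ≤ 2 * ε * α i * α r * α s := by positivity
    nlinarith
  have h2 : 0 < ε ^ 2 * (α i) ^ 2 * α r * α s * (α r + α s) := by
    have := hα r; have := hα s; have := hα i; positivity
  linarith
end
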